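/- arXiv:2102.08599 — 4 statements merged into one kernel-verified Lean document; each statement's English description precedes it below -/
import Mathlib

section
/- Let H be an invertible complex N×N matrix and A a nonzero complex N×N matrix, and let 𝒜 and 𝒜° be the associated subspaces. Then the difference dim 𝒜 − dim 𝒜° equals 1 or 2, and it equals 2 if and only if there exists a complex N×N matrix X satisfying X·A·H⁻¹ + A·H⁻¹·Xᵀ = 2·A·H⁻¹ and Xᵀ·H·conj(A) + H·conj(A)·X = 0. -/
open Matrix

noncomputable section

open scoped Classical

/-- The `m × m` upper-triangular Jordan block `J_{λ,m}` with eigenvalue `λ`. -/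
def Jb (l : ℂ) (m : ℕ) : Matrix (Fin m) (Fin m) ℂ :=
  Matrix.of fun i j =>
    if (j : ℕ) = (i : ℕ) then l else if (j : ℕ) = (i : ℕ) + 1 then 1 else 0

/-- The `m × m` anti-diagonal matrix `S_m` ( `(i,j)` entry is `1` iff `i + j = m + 1`,
1-based). -/
def Sb (m : ℕ) : Matrix (Fin m) (Fin m) ℂ :=
  Matrix.of fun i j => if (i : ℕ) + (j : ℕ) + 1 = m then 1 else 0

/-- The size `s(λ,m)` of the matrix `M_{λ,m}`: `m` if `λ ∈ ℝ`, and `2m` otherwise. -/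
def sz (l : ℂ) (m : ℕ) : ℕ := if l.im = 0 then m else 2 * m

/-- The matrix `M_{λ,m}`: the Jordan block `J_{λ,m}` if `λ ∈ ℝ`, and the block matrix
`[[0, J_{λ²,m}], [I, 0]]` otherwise. -/
def Mb (l : ℂ) (m : ℕ) : Matrix (Fin (sz l m)) (Fin (sz l m)) ℂ :=
  Matrix.of fun i j =>
    if l.im = 0 then
      (if (j : ℕ) = (i : ℕ) then l else if (j : ℕ) = (i : ℕ) + 1 then 1 else 0)
    else if (i : ℕ) < m ∧ m ≤ (j : ℕ) then
      (if (j : ℕ) - m = (i : ℕ) then l ^ 2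
       else if (j : ℕ) - m = (i : ℕ) + 1 then 1 else 0)
    else if m ≤ (i : ℕ) ∧ (i : ℕ) - m = (j : ℕ) then 1 else 0

/-- The matrix `N_{λ,m}`: `S_m` if `λ ∈ ℝ` and `S_{2m}` otherwise. -/
def Nb (l : ℂ) (m : ℕ) : Matrix (Fin (sz l m)) (Fin (sz l m)) ℂ := Sb (sz l m)

/-- A complex number is normalized if `Re λ ≥ 0` and, when `Re λ = 0`, also `Im λ ≥ 0`. -/
def Normalized (l : ℂ) : Prop := 0 ≤ l.re ∧ (l.re = 0 → 0 ≤ l.im)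

/-- The linear map `B ↦ B * X + X * Bᵀ`. -/
def rmap {n : Type*} [Fintype n] (X : Matrix n n ℂ) :
    Matrix n n ℂ →ₗ[ℂ] Matrix n n ℂ where
  toFun B := B * X + X * Bᵀ
  map_add' B C := by
    simp only [Matrix.add_mul, Matrix.mul_add, Matrix.transpose_add]
    abel
  map_smul' c B := by
    simp only [Matrix.smul_mul, Matrix.mul_smul, Matrix.transpose_smul, smul_add,
      RingHom.id_apply]

/-- The linear map `B ↦ Bᵀ * Y + Y * B`. -/
def lmap {n : Type*} [Fintype n] (Y : Matrix n n ℂ) :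
    Matrix n n ℂ →ₗ[ℂ] Matrix n n ℂ where
  toFun B := Bᵀ * Y + Y * B
  map_add' B C := by
    simp only [Matrix.add_mul, Matrix.mul_add, Matrix.transpose_add]
    abel
  map_smul' c B := by
    simp only [Matrix.smul_mul, Matrix.mul_smul, Matrix.transpose_smul, smul_add,
      RingHom.id_apply]

/-- The subspace `𝒜°` associated with `(H, A)`:  matrices `B` with
`B·A·H⁻¹ + A·H⁻¹·Bᵀ = 0` and `Bᵀ·H·conj(A) + H·conj(A)·B = 0`. -/
def scriptAo {n : Type*} [Fintype n] [DecidableEq n] (H A : Matrix n n ℂ) :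
    Submodule ℂ (Matrix n n ℂ) :=
  LinearMap.ker (rmap (A * H⁻¹)) ⊓ LinearMap.ker (lmap (H * A.map (starRingEnd ℂ)))

/-- The subspace `𝒜` associated with `(H, A)`:  matrices `B` with
`B·A·H⁻¹ + A·H⁻¹·Bᵀ ∈ ℂ·(A·H⁻¹)` and `Bᵀ·H·conj(A) + H·conj(A)·B ∈ ℂ·(H·conj(A))`. -/
def scriptA {n : Type*} [Fintype n] [DecidableEq n] (H A : Matrix n n ℂ) :
    Submodule ℂ (Matrix n n ℂ) :=
  Submodule.comap (rmap (A * H⁻¹)) (Submodule.span ℂ {A * H⁻¹}) ⊓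
    Submodule.comap (lmap (H * A.map (starRingEnd ℂ)))
      (Submodule.span ℂ {H * A.map (starRingEnd ℂ)})

lemma rmap_apply {n : Type*} [Fintype n] (X B : Matrix n n ℂ) :
    rmap X B = B * X + X * Bᵀ := rfl

lemma lmap_apply {n : Type*} [Fintype n] (Y B : Matrix n n ℂ) :
    lmap Y B = Bᵀ * Y + Y * B := rfl

set_option maxHeartbeats 1000000 in
set_option synthInstance.maxHeartbeats 400000 in
theorem aux_stmt {N : ℕ} (P Q : Matrix (Fin N) (Fin N) ℂ) (hPne : P ≠ 0) (hQne : Q ≠ 0) :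
    (Module.finrank ℂ ↥(Submodule.comap (rmap P) (Submodule.span ℂ {P}) ⊓
        Submodule.comap (lmap Q) (Submodule.span ℂ {Q})) =
      Module.finrank ℂ ↥(LinearMap.ker (rmap P) ⊓ LinearMap.ker (lmap Q)) + 1 ∨
     Module.finrank ℂ ↥(Submodule.comap (rmap P) (Submodule.span ℂ {P}) ⊓
        Submodule.comap (lmap Q) (Submodule.span ℂ {Q})) =
      Module.finrank ℂ ↥(LinearMap.ker (rmap P) ⊓ LinearMap.ker (lmap Q)) + 2) ∧
    (Module.finrank ℂ ↥(Submodule.comap (rmap P) (Submodule.span ℂ {P}) ⊓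
        Submodule.comap (lmap Q) (Submodule.span ℂ {Q})) =
      Module.finrank ℂ ↥(LinearMap.ker (rmap P) ⊓ LinearMap.ker (lmap Q)) + 2 ↔
      ∃ X : Matrix (Fin N) (Fin N) ℂ,
        X * P + P * Xᵀ = (2 : ℂ) • P ∧ Xᵀ * Q + Q * X = 0) := by
  set MA : Submodule ℂ (Matrix (Fin N) (Fin N) ℂ) := Submodule.comap (rmap P) (Submodule.span ℂ {P}) ⊓
      Submodule.comap (lmap Q) (Submodule.span ℂ {Q}) with hMA
  set MO : Submodule ℂ (Matrix (Fin N) (Fin N) ℂ) := LinearMap.ker (rmap P) ⊓ LinearMap.ker (lmap Q) with hMO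
  set Φ : Matrix (Fin N) (Fin N) ℂ →ₗ[ℂ] _ × _ := (rmap P).prod (lmap Q) with hΦ
  set v₀ : Matrix (Fin N) (Fin N) ℂ × Matrix (Fin N) (Fin N) ℂ := (P, 0) with hv₀
  set v₁ : Matrix (Fin N) (Fin N) ℂ × Matrix (Fin N) (Fin N) ℂ := (0, Q) with hv₁
  set W : Submodule ℂ (Matrix (Fin N) (Fin N) ℂ × Matrix (Fin N) (Fin N) ℂ) := Submodule.span ℂ {v₀, v₁} with hW
  have hmemW : ∀ u v : Matrix (Fin N) (Fin N) ℂ, (u, v) ∈ W ↔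
      u ∈ Submodule.span ℂ {P} ∧ v ∈ Submodule.span ℂ {Q} := by
    intro u v
    rw [hW, Submodule.mem_span_pair]
    simp only [hv₀, hv₁, Prod.smul_mk, Prod.mk_add_mk, smul_zero, add_zero, zero_add,
      Prod.mk.injEq, Submodule.mem_span_singleton]
    constructor
    · rintro ⟨a, b, h1, h2⟩; exact ⟨⟨a, h1⟩, ⟨b, h2⟩⟩
    · rintro ⟨⟨a, h1⟩, ⟨b, h2⟩⟩; exact ⟨a, b, h1, h2⟩
  have hAmem : ∀ B : Matrix (Fin N) (Fin N) ℂ, B ∈ MA ↔ Φ B ∈ W := by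
    intro B
    rw [hMA, Submodule.mem_inf, Submodule.mem_comap, Submodule.mem_comap]
    exact (hmemW (rmap P B) (lmap Q B)).symm
  have hAeq : MA = Submodule.comap Φ W := by
    ext B; rw [Submodule.mem_comap]; exact hAmem B
  have hAoeq : MO = LinearMap.ker Φ := (LinearMap.ker_prod _ _).symm
  have hle : MO ≤ MA := by
    intro B hB
    rw [hAoeq, LinearMap.mem_ker] at hB
    rw [hAmem, hB]
    exact W.zero_mem
  -- rank–nullity for Φ restricted to MA
  set f : ↥MA →ₗ[ℂ] _ := Φ.comp MA.subtype with hf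
  set V := Submodule.map Φ MA with hV
  have hkerf : LinearMap.ker f = Submodule.comap MA.subtype MO := by
    rw [hf, LinearMap.ker_comp, ← hAoeq]
  have hrangef : LinearMap.range f = V := by
    rw [hf, LinearMap.range_comp, Submodule.range_subtype, hV]
  have hkey : Module.finrank ℂ ↥MA = Module.finrank ℂ ↥MO + Module.finrank ℂ ↥V := by
    have h0 := LinearMap.finrank_range_add_finrank_ker f
    rw [hrangef, hkerf] at h0
    have h1 : Module.finrank ℂ ↥(Submodule.comap MA.subtype MO) = Module.finrank ℂ ↥MO :=
      (Submodule.comapSubtypeEquivOfLe hle).finrank_eq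
    omega
  have hVW : V ≤ W := by rw [hV, hAeq]; exact Submodule.map_comap_le Φ W
  have hv₁ne : v₁ ≠ 0 := by
    intro h
    exact hQne (congrArg Prod.snd h)
  have hli : LinearIndependent ℂ ![v₀, v₁] := by
    rw [linearIndependent_fin2]
    refine ⟨by simpa using hv₁ne, ?_⟩
    intro a h
    apply hPne
    have := congrArg Prod.fst h
    simpa [hv₀, hv₁] using this.symm
  have hrange : Set.range ![v₀, v₁] = {v₀, v₁} := by
    ext x
    simp only [Set.mem_range, Fin.exists_fin_two, Matrix.cons_val_zero, Matrix.cons_val_one,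
      Matrix.head_cons, Set.mem_insert_iff, Set.mem_singleton_iff, eq_comm]
  have hWrank : Module.finrank ℂ ↥W = 2 := by
    rw [hW, ← hrange, finrank_span_eq_card hli, Fintype.card_fin]
  -- the element Φ 1
  set w₁ : Matrix (Fin N) (Fin N) ℂ × Matrix (Fin N) (Fin N) ℂ := ((2 : ℂ) • P, (2 : ℂ) • Q) with hw₁
  have hΦ1 : Φ (1 : Matrix (Fin N) (Fin N) ℂ) = w₁ := by
    rw [hΦ]
    apply Prod.ext
    · show rmap P 1 = (2 : ℂ) • P
      rw [rmap_apply, Matrix.transpose_one, Matrix.one_mul, Matrix.mul_one, two_smul]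
    · show lmap Q 1 = (2 : ℂ) • Q
      rw [lmap_apply, Matrix.transpose_one, Matrix.one_mul, Matrix.mul_one, two_smul]
  have h1A : (1 : Matrix (Fin N) (Fin N) ℂ) ∈ MA := by
    rw [hAmem, hΦ1, hw₁, hmemW]
    exact ⟨Submodule.smul_mem _ _ (Submodule.mem_span_singleton_self P),
      Submodule.smul_mem _ _ (Submodule.mem_span_singleton_self Q)⟩
  have hw₁V : w₁ ∈ V := by
    rw [hV, ← hΦ1]
    exact Submodule.mem_map_of_mem h1A
  have hw₁ne : w₁ ≠ 0 := by
    intro h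
    apply hPne
    have h1 : (2 : ℂ) • P = 0 := congrArg Prod.fst h
    simpa [smul_eq_zero] using h1
  have hVpos : 0 < Module.finrank ℂ ↥V :=
    Module.finrank_pos_iff_exists_ne_zero.mpr ⟨⟨w₁, hw₁V⟩, by simpa using hw₁ne⟩
  have hVle : Module.finrank ℂ ↥V ≤ 2 := hWrank ▸ Submodule.finrank_mono hVW
  set w₂ : Matrix (Fin N) (Fin N) ℂ × Matrix (Fin N) (Fin N) ℂ := ((2 : ℂ) • P, 0) with hw₂
  constructor
  · omega
  · constructor
    · intro h
      have hV2 : Module.finrank ℂ ↥V = 2 := by omega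
      have hVeqW : V = W := Submodule.eq_of_le_of_finrank_eq hVW (by rw [hV2, hWrank])
      have hw₂W : w₂ ∈ W := by
        rw [hw₂, hmemW]
        exact ⟨Submodule.smul_mem _ _ (Submodule.mem_span_singleton_self P),
          Submodule.zero_mem _⟩
      rw [← hVeqW, hV] at hw₂W
      obtain ⟨X, hXA, hXeq⟩ := hw₂W
      refine ⟨X, ?_, ?_⟩
      · have h1 : rmap P X = (2 : ℂ) • P := congrArg Prod.fst hXeq
        rwa [rmap_apply] at h1
      · have h2 : lmap Q X = 0 := congrArg Prod.snd hXeq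
        rwa [lmap_apply] at h2
    · rintro ⟨X, hX1, hX2⟩
      have hXA : X ∈ MA := by
        rw [hAmem, hmemW]
        constructor
        · show X * P + P * Xᵀ ∈ _
          rw [hX1]
          exact Submodule.smul_mem _ _ (Submodule.mem_span_singleton_self P)
        · show Xᵀ * Q + Q * X ∈ _
          rw [hX2]
          exact Submodule.zero_mem _
      have hw₂V : w₂ ∈ V := by
        rw [hV]
        refine ⟨X, hXA, ?_⟩
        apply Prod.ext
        · show rmap P X = (2 : ℂ) • P
          rwa [rmap_apply]
        · show lmap Q X = 0
          rwa [lmap_apply]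
      -- two independent elements of V
      have hli2 : LinearIndependent ℂ ![(⟨w₁, hw₁V⟩ : ↥V), ⟨w₂, hw₂V⟩] := by
        apply LinearIndependent.of_comp V.subtype
        have hcomp : (V.subtype ∘ ![(⟨w₁, hw₁V⟩ : ↥V), ⟨w₂, hw₂V⟩]) = ![w₁, w₂] := by
          funext i; fin_cases i <;> rfl
        rw [hcomp, linearIndependent_fin2]
        constructor
        · intro h
          apply hPne
          have h1 : (2 : ℂ) • P = 0 := congrArg Prod.fst h
          simpa [smul_eq_zero] using h1
        · intro a h
          apply hQne
          have h2 : a • (0 : Matrix (Fin N) (Fin N) ℂ) = (2 : ℂ) • Q := congrArg Prod.snd h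
          rw [smul_zero] at h2
          have := h2.symm
          simpa [smul_eq_zero] using this
      have h2le : 2 ≤ Module.finrank ℂ ↥V := by
        simpa using hli2.fintype_card_le_finrank
      omega

/-- For invertible `H` and nonzero `A`, `dim 𝒜 − dim 𝒜°` is `1` or `2`,
and it is `2` iff there is a "conformal scaling" element `X`. -/
theorem stmt1 (N : ℕ) (H A : Matrix (Fin N) (Fin N) ℂ) (hH : IsUnit H) (hA : A ≠ 0) :
    (Module.finrank ℂ ↥(scriptA H A) = Module.finrank ℂ ↥(scriptAo H A) + 1 ∨
      Module.finrank ℂ ↥(scriptA H A) = Module.finrank ℂ ↥(scriptAo H A) + 2) ∧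
    (Module.finrank ℂ ↥(scriptA H A) = Module.finrank ℂ ↥(scriptAo H A) + 2 ↔
      ∃ X : Matrix (Fin N) (Fin N) ℂ,
        X * (A * H⁻¹) + (A * H⁻¹) * Xᵀ = (2 : ℂ) • (A * H⁻¹) ∧
        Xᵀ * (H * A.map (starRingEnd ℂ)) + (H * A.map (starRingEnd ℂ)) * X = 0) := by
  have hdet : IsUnit H.det := (Matrix.isUnit_iff_isUnit_det H).mp hH
  have hinv : H⁻¹ * H = 1 := Matrix.nonsing_inv_mul H hdet
  have hPne : A * H⁻¹ ≠ 0 := by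
    intro h
    apply hA
    have : A * H⁻¹ * H = A := by
      rw [Matrix.mul_assoc, hinv, Matrix.mul_one]
    rw [← this, h, Matrix.zero_mul]
  have hQne : H * A.map (starRingEnd ℂ) ≠ 0 := by
    intro h
    apply hA
    have hmap : A.map (starRingEnd ℂ) = 0 := by
      have : H⁻¹ * (H * A.map (starRingEnd ℂ)) = A.map (starRingEnd ℂ) := by
        rw [← Matrix.mul_assoc, hinv, Matrix.one_mul]
      rw [← this, h, Matrix.mul_zero]
    ext i j
    have := congrFun (congrFun hmap i) j
    simpa [Matrix.map_apply] using this
  exact aux_stmt (A * H⁻¹) (H * A.map (starRingEnd ℂ)) hPne hQne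
end
end

section
/- Let λ be a nonzero normalized complex number and let m ≤ p be positive integers. The space of complex s(λ,m)×s(λ,p) matrices X satisfying X·conj(M_{λ,p})·M_{λ,p} = conj(M_{λ,m})·M_{λ,m}·X is a ℂ-vector space whose dimension equals: m if λ is a positive real number; 2m if λ² ∉ ℝ; and 4m if λ² is a negative real number. -/
open Matrix

noncomputable section

open scoped Classical

/-- The linear map `X ↦ X·C₂ − C₁·X` on rectangular matrices. -/
def interMap {a b : Type*} [Fintype a] [Fintype b]
    (C1 : Matrix a a ℂ) (C2 : Matrix b b ℂ) :
    Matrix a b ℂ →ₗ[ℂ] Matrix a b ℂ where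
  toFun X := X * C2 - C1 * X
  map_add' X Y := by
    simp only [Matrix.add_mul, Matrix.mul_add]
    abel
  map_smul' c X := by
    simp only [Matrix.smul_mul, Matrix.mul_smul, smul_sub, RingHom.id_apply]

/-!
For real `λ > 0` the matrix `conj(M)·M` is `J_{λ,s}²`; for non-real `λ` it is, after reordering
rows and columns, the block diagonal matrix `diag(J_{conj λ², m}, J_{λ², m})`. The dimension is
therefore a sum of dimensions of spaces `{X | X·B = A·X}` between Jordan blocks.

* If `A - a` and `B - b` are nilpotent with `a ≠ b`, then `X·(B - a)ᵏ = (A - a)ᵏ·X = 0` for large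
  `k` while `B - a` is invertible, so `X = 0`.
* For `A = J_{μ,m}`, `B = J_{μ,p}` with `m ≤ p` the condition is `X·T_p = T_m·X`. The last basis
  vector is a cyclic vector of `T_p`, so `X` is determined by its last column `v`, and every `v`
  occurs (column `j` is `T_m^{p-1-j} v`, which needs `T_m^p = 0`): the dimension is `m`.
* Squaring does not change the solution space: if `X·J² = J²·X`, then `Y = X·J - J·X` satisfies
  `Y·J = (-J)·Y`, and `-J` has eigenvalue `-λ ≠ λ`, so `Y = 0`.
-/

namespace Matrix

variable {m n : Type*} [Fintype m] [Fintype n] [DecidableEq m] [DecidableEq n]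

theorem mul_pow_eq_pow_mul_of_mul_eq {R : Type*} [Semiring R] {A : Matrix m m R}
    {B : Matrix n n R} {X : Matrix m n R} (hX : X * B = A * X) (k : ℕ) : X * B ^ k = A ^ k * X := by
  induction k with
  | zero => simp
  | succ k ih => rw [pow_succ, ← Matrix.mul_assoc, ih, Matrix.mul_assoc, hX, pow_succ,
      Matrix.mul_assoc]

variable {K : Type*} [Field K]

theorem eq_zero_of_mul_eq_mul_of_isNilpotent {A : Matrix m m K} {B : Matrix n n K}
    {a b : K} (hab : a ≠ b) (hA : IsNilpotent (A - a • 1)) (hB : IsNilpotent (B - b • 1))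
    {X : Matrix m n K} (hX : X * B = A * X) : X = 0 := by
  obtain ⟨k, hk⟩ := hA
  have hXa : X * (B - a • 1) = (A - a • 1) * X := by
    simp only [Matrix.mul_sub, Matrix.sub_mul, hX, Matrix.mul_smul, Matrix.smul_mul,
      Matrix.mul_one, Matrix.one_mul]
  have hunit : IsUnit (B - a • 1) := by
    have hba : IsUnit ((b - a) • (1 : Matrix n n K)) := by
      rw [← Algebra.algebraMap_eq_smul_one]
      exact (Ne.isUnit (sub_ne_zero.mpr hab.symm)).map _
    convert hB.isUnit_add_left_of_commute hba ((Commute.one_right _).smul_right _) using 1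
    rw [sub_smul]
    abel
  have hk' : X * (B - a • 1) ^ k = 0 := by
    rw [Matrix.mul_pow_eq_pow_mul_of_mul_eq hXa, hk, Matrix.zero_mul]
  obtain ⟨u, hu⟩ := hunit.pow k
  calc X = X * (B - a • 1) ^ k * (↑u⁻¹ : Matrix n n K) := by
        rw [← hu, Matrix.mul_assoc, u.mul_inv, Matrix.mul_one]
    _ = 0 := by rw [hk', Matrix.zero_mul]

theorem mul_sq_eq_sq_mul_iff [CharZero K] {A : Matrix m m K} {B : Matrix n n K} {a : K}
    (ha : a ≠ 0) (hA : IsNilpotent (A - a • 1)) (hB : IsNilpotent (B - a • 1))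
    {X : Matrix m n K} : X * B ^ 2 = A ^ 2 * X ↔ X * B = A * X := by
  refine ⟨fun h => ?_, fun h => Matrix.mul_pow_eq_pow_mul_of_mul_eq h 2⟩
  have hY : (X * B - A * X) * B = -A * (X * B - A * X) := by
    simp only [Matrix.sub_mul, Matrix.mul_sub, Matrix.neg_mul, Matrix.mul_assoc, ← sq, h]
    simp only [← Matrix.mul_assoc, ← sq]
    abel
  have hA' : IsNilpotent (-A - (-a) • 1) := by
    simpa only [neg_smul, neg_sub_neg, neg_sub] using hA.neg
  exact sub_eq_zero.mp
    (Matrix.eq_zero_of_mul_eq_mul_of_isNilpotent (by rwa [Ne, CharZero.neg_eq_self_iff]) hA' hB hY)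

end Matrix

theorem Jb_zero_apply {n : ℕ} (i j : Fin n) :
    Jb 0 n i j = if (j : ℕ) = i + 1 then 1 else 0 := by
  simp only [Jb, Matrix.of_apply]
  split_ifs <;> simp_all

theorem mul_Jb_zero_apply {m p : ℕ} (X : Matrix (Fin m) (Fin p) ℂ) (i : Fin m) (j : Fin p) :
    (X * Jb 0 p) i j = if h : 1 ≤ (j : ℕ) then X i ⟨j - 1, by omega⟩ else 0 := by
  rw [Matrix.mul_apply]
  split_ifs with h
  · rw [Finset.sum_eq_single ⟨j - 1, by omega⟩]
    · rw [Jb_zero_apply, if_pos (by simp; omega), mul_one]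
    · intro t _ ht
      rw [Jb_zero_apply, if_neg (fun hc => ht (Fin.ext (by simp; omega))), mul_zero]
    · simp
  · exact Finset.sum_eq_zero fun t _ => by rw [Jb_zero_apply, if_neg (by omega), mul_zero]

theorem Jb_zero_pow_apply {n : ℕ} (k : ℕ) (i j : Fin n) :
    (Jb 0 n ^ k) i j = if (j : ℕ) = i + k then 1 else 0 := by
  induction k generalizing j with
  | zero => simp [Matrix.one_apply, Fin.ext_iff, eq_comm]
  | succ k ih =>
    rw [pow_succ, mul_Jb_zero_apply]
    split_ifs <;> simp_all
    omega

theorem Jb_zero_pow_eq_zero {n k : ℕ} (h : n ≤ k) : Jb 0 n ^ k = 0 := by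
  ext i j
  rw [Jb_zero_pow_apply, if_neg (by omega)]
  rfl

theorem Jb_zero_pow_mulVec_single_last {q : ℕ} (j : Fin (q + 1)) :
    Jb 0 (q + 1) ^ (q - (j : ℕ)) *ᵥ Pi.single (Fin.last q) 1 = Pi.single j 1 := by
  ext i
  have hj := j.is_le
  simp only [Matrix.mulVec_single_one, Matrix.col_apply, Jb_zero_pow_apply, Pi.single_apply,
    Fin.ext_iff, Fin.val_last, show q = i + (q - j) ↔ (i : ℕ) = j by omega]

theorem mem_ker_interMap {a b : Type*} [Fintype a] [Fintype b] {C₁ : Matrix a a ℂ}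
    {C₂ : Matrix b b ℂ} {X : Matrix a b ℂ} :
    X ∈ LinearMap.ker (interMap C₁ C₂) ↔ X * C₂ = C₁ * X :=
  sub_eq_zero

theorem eq_zero_of_mul_Jb_zero_eq_of_mulVec_single_last_eq_zero {m q : ℕ}
    {X : Matrix (Fin m) (Fin (q + 1)) ℂ} (hX : X * Jb 0 (q + 1) = Jb 0 m * X)
    (hlast : X *ᵥ Pi.single (Fin.last q) 1 = 0) : X = 0 := by
  have hcol (j : Fin (q + 1)) : X *ᵥ Pi.single j 1 = 0 := by
    rw [← Jb_zero_pow_mulVec_single_last, Matrix.mulVec_mulVec,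
      Matrix.mul_pow_eq_pow_mul_of_mul_eq hX, ← Matrix.mulVec_mulVec, hlast, Matrix.mulVec_zero]
  ext i j
  simpa using congrFun (hcol j) i

def ofLastCol {m : ℕ} (q : ℕ) (v : Fin m → ℂ) : Matrix (Fin m) (Fin (q + 1)) ℂ :=
  Matrix.of fun i j => (Jb 0 m ^ (q - (j : ℕ)) *ᵥ v) i

theorem ofLastCol_mulVec_single_last {m : ℕ} (q : ℕ) (v : Fin m → ℂ) :
    ofLastCol q v *ᵥ Pi.single (Fin.last q) 1 = v := by
  ext i
  simp [ofLastCol]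

theorem ofLastCol_mul_Jb_zero {m q : ℕ} (hm : m ≤ q + 1) (v : Fin m → ℂ) :
    ofLastCol q v * Jb 0 (q + 1) = Jb 0 m * ofLastCol q v := by
  ext i j
  have hcol : (Jb 0 m * ofLastCol q v) i j = (Jb 0 m ^ (q + 1 - j) *ᵥ v) i := by
    rw [Nat.sub_add_comm j.is_le, pow_succ', ← Matrix.mulVec_mulVec]
    rfl
  rw [mul_Jb_zero_apply, hcol]
  split_ifs with hj
  · simp only [ofLastCol, Matrix.of_apply]
    rw [show q - ((j : ℕ) - 1) = q + 1 - j by omega]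
  · rw [Jb_zero_pow_eq_zero (by omega), Matrix.zero_mulVec]
    rfl

theorem finrank_ker_interMap_Jb_zero {m p : ℕ} (hmp : m ≤ p) :
    Module.finrank ℂ (LinearMap.ker (interMap (Jb 0 m) (Jb 0 p))) = m := by
  obtain _ | q := p
  · obtain rfl : m = 0 := by omega
    exact Module.finrank_zero_of_subsingleton
  let lastCol : LinearMap.ker (interMap (Jb 0 m) (Jb 0 (q + 1))) →ₗ[ℂ] Fin m → ℂ :=
    { toFun := fun X => X.1 *ᵥ Pi.single (Fin.last q) 1
      map_add' := fun X Y => Matrix.add_mulVec _ _ _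
      map_smul' := fun c X => Matrix.smul_mulVec _ _ _ }
  have hinj : Function.Injective lastCol :=
    (injective_iff_map_eq_zero lastCol).mpr fun X hX => Subtype.ext
      (eq_zero_of_mul_Jb_zero_eq_of_mulVec_single_last_eq_zero (mem_ker_interMap.mp X.2) hX)
  have hsurj : Function.Surjective lastCol := fun v =>
    ⟨⟨ofLastCol q v, mem_ker_interMap.mpr (ofLastCol_mul_Jb_zero hmp v)⟩,
      ofLastCol_mulVec_single_last q v⟩
  rw [(LinearEquiv.ofBijective lastCol ⟨hinj, hsurj⟩).finrank_eq, Module.finrank_fin_fun]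

theorem Jb_eq_smul_one_add (l : ℂ) (n : ℕ) : Jb l n = l • 1 + Jb 0 n := by
  ext i j
  simp only [Jb, Matrix.add_apply, Matrix.smul_apply, Matrix.one_apply, Matrix.of_apply,
    smul_eq_mul, Fin.ext_iff, eq_comm (a := (i : ℕ))]
  split_ifs <;> simp

theorem isNilpotent_Jb_sub_smul_one (l : ℂ) (n : ℕ) : IsNilpotent (Jb l n - l • 1) := by
  rw [Jb_eq_smul_one_add, add_sub_cancel_left]
  exact ⟨n, Jb_zero_pow_eq_zero le_rfl⟩

theorem interMap_smul_one_add {a b : Type*} [Fintype a] [DecidableEq a] [Fintype b]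
    [DecidableEq b] (c : ℂ) (C₁ : Matrix a a ℂ) (C₂ : Matrix b b ℂ) :
    interMap (c • 1 + C₁) (c • 1 + C₂) = interMap C₁ C₂ := by
  ext X : 1
  change X * (c • 1 + C₂) - (c • 1 + C₁) * X = X * C₂ - C₁ * X
  simp only [Matrix.mul_add, Matrix.add_mul, Matrix.mul_smul, Matrix.smul_mul, Matrix.mul_one,
    Matrix.one_mul]
  abel

theorem finrank_ker_interMap_Jb (l : ℂ) {m p : ℕ} (hmp : m ≤ p) :
    Module.finrank ℂ (LinearMap.ker (interMap (Jb l m) (Jb l p))) = m := by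
  rw [Jb_eq_smul_one_add l, Jb_eq_smul_one_add l, interMap_smul_one_add]
  exact finrank_ker_interMap_Jb_zero hmp

theorem ker_interMap_Jb_of_ne {l l' : ℂ} (h : l ≠ l') (m p : ℕ) :
    LinearMap.ker (interMap (Jb l m) (Jb l' p)) = ⊥ :=
  (Submodule.eq_bot_iff _).mpr fun _ hX =>
    Matrix.eq_zero_of_mul_eq_mul_of_isNilpotent h (isNilpotent_Jb_sub_smul_one l m)
      (isNilpotent_Jb_sub_smul_one l' p) (mem_ker_interMap.mp hX)

theorem ker_interMap_Jb_sq {l : ℂ} (hl : l ≠ 0) (m p : ℕ) :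
    LinearMap.ker (interMap (Jb l m ^ 2) (Jb l p ^ 2)) =
      LinearMap.ker (interMap (Jb l m) (Jb l p)) := by
  ext X
  rw [mem_ker_interMap, mem_ker_interMap]
  exact Matrix.mul_sq_eq_sq_mul_iff hl (isNilpotent_Jb_sub_smul_one l m)
    (isNilpotent_Jb_sub_smul_one l p)

theorem finrank_ker_interMap_reindex {a a' b b' : Type*} [Fintype a] [Fintype a'] [Fintype b]
    [Fintype b'] (ea : a ≃ a') (eb : b ≃ b') (C₁ : Matrix a a ℂ) (C₂ : Matrix b b ℂ) :
    Module.finrank ℂ (LinearMap.ker (interMap (Matrix.reindex ea ea C₁) (Matrix.reindex eb eb C₂)))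
      = Module.finrank ℂ (LinearMap.ker (interMap C₁ C₂)) := by
  let e := Matrix.reindexLinearEquiv ℂ ℂ ea eb
  suffices LinearMap.ker (interMap (Matrix.reindex ea ea C₁) (Matrix.reindex eb eb C₂)) =
      (LinearMap.ker (interMap C₁ C₂)).map e.toLinearMap by
    rw [this, LinearEquiv.finrank_map_eq]
  ext X
  obtain ⟨Y, rfl⟩ := e.surjective X
  rw [Submodule.mem_map_equiv, e.symm_apply_apply, mem_ker_interMap, mem_ker_interMap,
    ← Matrix.coe_reindexLinearEquiv ℂ ℂ ea ea, ← Matrix.coe_reindexLinearEquiv ℂ ℂ eb eb,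
    Matrix.reindexLinearEquiv_mul, Matrix.reindexLinearEquiv_mul, e.injective.eq_iff]

theorem finrank_ker_interMap_fromBlocks {a b c d : Type*} [Fintype a] [Fintype b] [Fintype c]
    [Fintype d] (A₁ : Matrix a a ℂ) (A₂ : Matrix b b ℂ) (B₁ : Matrix c c ℂ)
    (B₂ : Matrix d d ℂ) :
    Module.finrank ℂ (LinearMap.ker
        (interMap (Matrix.fromBlocks A₁ 0 0 A₂) (Matrix.fromBlocks B₁ 0 0 B₂))) =
      Module.finrank ℂ (LinearMap.ker (interMap A₁ B₁)) +
        Module.finrank ℂ (LinearMap.ker (interMap A₁ B₂)) +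
        Module.finrank ℂ (LinearMap.ker (interMap A₂ B₁)) +
        Module.finrank ℂ (LinearMap.ker (interMap A₂ B₂)) := by
  have hmem (X : Matrix (a ⊕ b) (c ⊕ d) ℂ) :
      X ∈ LinearMap.ker (interMap (Matrix.fromBlocks A₁ 0 0 A₂) (Matrix.fromBlocks B₁ 0 0 B₂)) ↔
        X.toBlocks₁₁ ∈ LinearMap.ker (interMap A₁ B₁) ∧
        X.toBlocks₁₂ ∈ LinearMap.ker (interMap A₁ B₂) ∧
        X.toBlocks₂₁ ∈ LinearMap.ker (interMap A₂ B₁) ∧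
        X.toBlocks₂₂ ∈ LinearMap.ker (interMap A₂ B₂) := by
    simp only [mem_ker_interMap]
    conv_lhs => rw [← Matrix.fromBlocks_toBlocks X, Matrix.fromBlocks_multiply,
      Matrix.fromBlocks_multiply]
    simp only [Matrix.mul_zero, Matrix.zero_mul, add_zero, zero_add, Matrix.fromBlocks_inj]
  let e : LinearMap.ker (interMap (Matrix.fromBlocks A₁ 0 0 A₂) (Matrix.fromBlocks B₁ 0 0 B₂))
      ≃ₗ[ℂ] LinearMap.ker (interMap A₁ B₁) × LinearMap.ker (interMap A₁ B₂) ×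
        LinearMap.ker (interMap A₂ B₁) × LinearMap.ker (interMap A₂ B₂) :=
    { toFun := fun X => (⟨_, ((hmem X).mp X.2).1⟩, ⟨_, ((hmem X).mp X.2).2.1⟩,
        ⟨_, ((hmem X).mp X.2).2.2.1⟩, ⟨_, ((hmem X).mp X.2).2.2.2⟩)
      invFun := fun Y => ⟨Matrix.fromBlocks Y.1 Y.2.1 Y.2.2.1 Y.2.2.2, (hmem _).mpr (by
        simpa only [Matrix.toBlocks_fromBlocks₁₁, Matrix.toBlocks_fromBlocks₁₂,
          Matrix.toBlocks_fromBlocks₂₁, Matrix.toBlocks_fromBlocks₂₂] using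
          ⟨Y.1.2, Y.2.1.2, Y.2.2.1.2, Y.2.2.2.2⟩)⟩
      map_add' := fun _ _ => rfl
      map_smul' := fun _ _ => rfl
      left_inv := fun X => Subtype.ext (Matrix.fromBlocks_toBlocks X.1)
      right_inv := fun _ => rfl }
  rw [e.finrank_eq, Module.finrank_prod, Module.finrank_prod, Module.finrank_prod]
  ring

theorem Jb_map_conj (l : ℂ) (n : ℕ) :
    (Jb l n).map (starRingEnd ℂ) = Jb (starRingEnd ℂ l) n := by
  ext i j
  simp only [Matrix.map_apply, Jb, Matrix.of_apply]
  split_ifs <;> simp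

theorem conj_Mb_mul_Mb_of_im_eq_zero {l : ℂ} (hl : l.im = 0) (k : ℕ) :
    (Mb l k).map (starRingEnd ℂ) * Mb l k = Jb l (sz l k) ^ 2 := by
  have hMb : Mb l k = Jb l (sz l k) := by
    ext i j
    simp [Mb, Jb, hl]
  rw [hMb, Jb_map_conj, Complex.conj_eq_iff_im.mpr hl, sq]

theorem Mb_eq_reindex_fromBlocks {l : ℂ} (hl : l.im ≠ 0) (k : ℕ) :
    ∃ e : Fin k ⊕ Fin k ≃ Fin (sz l k),
      Mb l k = Matrix.reindex e e (Matrix.fromBlocks 0 (Jb (l ^ 2) k) 1 0) := by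
  let e : Fin k ⊕ Fin k ≃ Fin (sz l k) :=
    finSumFinEquiv.trans (finCongr (by simp [sz, hl, two_mul]))
  refine ⟨e, ?_⟩
  rw [Matrix.reindex_apply, ← Matrix.submatrix_id_id (Mb l k), ← e.self_comp_symm,
    ← Matrix.submatrix_submatrix]
  congr 1
  ext (i | i) (j | j) <;> have := i.isLt <;> have := j.isLt <;>
    simp [e, Mb, Jb, hl, Matrix.one_apply, Fin.ext_iff] <;> (try split_ifs) <;>
    first | rfl | omega

theorem conj_Mb_mul_Mb_eq_reindex {l : ℂ} (hl : l.im ≠ 0) (k : ℕ) :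
    ∃ e : Fin k ⊕ Fin k ≃ Fin (sz l k), (Mb l k).map (starRingEnd ℂ) * Mb l k =
      Matrix.reindex e e (Matrix.fromBlocks (Jb (starRingEnd ℂ (l ^ 2)) k) 0 0 (Jb (l ^ 2) k)) := by
  obtain ⟨e, he⟩ := Mb_eq_reindex_fromBlocks hl k
  refine ⟨e, ?_⟩
  rw [he, Matrix.reindex_apply, Matrix.reindex_apply, ← Matrix.submatrix_map,
    Matrix.submatrix_mul_equiv, Matrix.fromBlocks_map, Matrix.fromBlocks_multiply, Jb_map_conj,
    map_pow]
  simp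

theorem finrank_ker_interMap_conj_Mb_mul_Mb {l : ℂ} (hl : l.im ≠ 0) (m p : ℕ) :
    Module.finrank ℂ (LinearMap.ker (interMap
        ((Mb l m).map (starRingEnd ℂ) * Mb l m) ((Mb l p).map (starRingEnd ℂ) * Mb l p))) =
      Module.finrank ℂ (LinearMap.ker
          (interMap (Jb (starRingEnd ℂ (l ^ 2)) m) (Jb (starRingEnd ℂ (l ^ 2)) p))) +
        Module.finrank ℂ (LinearMap.ker
          (interMap (Jb (starRingEnd ℂ (l ^ 2)) m) (Jb (l ^ 2) p))) +
        Module.finrank ℂ (LinearMap.ker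
          (interMap (Jb (l ^ 2) m) (Jb (starRingEnd ℂ (l ^ 2)) p))) +
        Module.finrank ℂ (LinearMap.ker (interMap (Jb (l ^ 2) m) (Jb (l ^ 2) p))) := by
  obtain ⟨em, hm⟩ := conj_Mb_mul_Mb_eq_reindex hl m
  obtain ⟨ep, hp⟩ := conj_Mb_mul_Mb_eq_reindex hl p
  rw [hm, hp, finrank_ker_interMap_reindex, finrank_ker_interMap_fromBlocks]

theorem stmt3_general (l : ℂ) (m p : ℕ) (hmp : m ≤ p) :
    ((l.im = 0 ∧ 0 < l.re) →
      Module.finrank ℂ ↥(LinearMap.ker (interMap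
        ((Mb l m).map (starRingEnd ℂ) * Mb l m)
        ((Mb l p).map (starRingEnd ℂ) * Mb l p))) = m) ∧
    ((l ^ 2).im ≠ 0 →
      Module.finrank ℂ ↥(LinearMap.ker (interMap
        ((Mb l m).map (starRingEnd ℂ) * Mb l m)
        ((Mb l p).map (starRingEnd ℂ) * Mb l p))) = 2 * m) ∧
    (((l ^ 2).im = 0 ∧ (l ^ 2).re < 0) →
      Module.finrank ℂ ↥(LinearMap.ker (interMap
        ((Mb l m).map (starRingEnd ℂ) * Mb l m)
        ((Mb l p).map (starRingEnd ℂ) * Mb l p))) = 4 * m) := by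
  have hsq_im : (l ^ 2).im = 2 * l.re * l.im := by rw [sq, Complex.mul_im]; ring
  have hsq_re : (l ^ 2).re = l.re ^ 2 - l.im ^ 2 := by rw [sq, Complex.mul_re]; ring
  refine ⟨fun ⟨hl, hre⟩ => ?_, fun hl2 => ?_, fun ⟨hl2, hre2⟩ => ?_⟩
  · have hsz (k : ℕ) : sz l k = k := if_pos hl
    have hl0 : l ≠ 0 := fun h => by simp [h] at hre
    rw [conj_Mb_mul_Mb_of_im_eq_zero hl, conj_Mb_mul_Mb_of_im_eq_zero hl, ker_interMap_Jb_sq hl0,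
      finrank_ker_interMap_Jb l (by rwa [hsz, hsz]), hsz]
  · have hl : l.im ≠ 0 := fun h => hl2 (by rw [hsq_im, h, mul_zero])
    have hne : starRingEnd ℂ (l ^ 2) ≠ l ^ 2 := mt Complex.conj_eq_iff_im.mp hl2
    rw [finrank_ker_interMap_conj_Mb_mul_Mb hl, ker_interMap_Jb_of_ne hne,
      ker_interMap_Jb_of_ne hne.symm, finrank_bot, finrank_ker_interMap_Jb _ hmp,
      finrank_ker_interMap_Jb _ hmp]
    ring
  · have hl : l.im ≠ 0 := fun h => by nlinarith [sq_nonneg l.re]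
    rw [finrank_ker_interMap_conj_Mb_mul_Mb hl, Complex.conj_eq_iff_im.mpr hl2,
      finrank_ker_interMap_Jb _ hmp]
    ring

/-- Dimension of the space of matrices `X` with
`X·conj(M_{λ,p})·M_{λ,p} = conj(M_{λ,m})·M_{λ,m}·X`, for a nonzero normalized `λ`
and `m ≤ p`. -/
theorem stmt3 (l : ℂ) (hl0 : l ≠ 0) (hl : Normalized l) (m p : ℕ)
    (hm : 0 < m) (hmp : m ≤ p) :
    ((l.im = 0 ∧ 0 < l.re) →
      Module.finrank ℂ ↥(LinearMap.ker (interMap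
        ((Mb l m).map (starRingEnd ℂ) * Mb l m)
        ((Mb l p).map (starRingEnd ℂ) * Mb l p))) = m) ∧
    ((l ^ 2).im ≠ 0 →
      Module.finrank ℂ ↥(LinearMap.ker (interMap
        ((Mb l m).map (starRingEnd ℂ) * Mb l m)
        ((Mb l p).map (starRingEnd ℂ) * Mb l p))) = 2 * m) ∧
    (((l ^ 2).im = 0 ∧ (l ^ 2).re < 0) →
      Module.finrank ℂ ↥(LinearMap.ker (interMap
        ((Mb l m).map (starRingEnd ℂ) * Mb l m)
        ((Mb l p).map (starRingEnd ℂ) * Mb l p))) = 4 * m) :=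
  stmt3_general l m p hmp
end
end

section
/- Let m be a positive integer and let I_alt denote the m×m diagonal matrix whose (j,j) entry is (−1)^{j+1} (so the diagonal alternates 1, −1, 1, −1, …). The set of complex m×m matrices X satisfying X·T_m·S_m + T_m·S_m·Xᵀ = 0 and Xᵀ·S_m·T_m + S_m·T_m·X = 0 is exactly { (Σ_{k=1}^{⌈m/2⌉} a_k·T_m^{m−2k+1})·I_alt : a_1, …, a_{⌈m/2⌉} ∈ ℂ }; in particular, this solution space has complex dimension ⌈m/2⌉ (the least integer ≥ m/2). -/
open Matrix

noncomputable section

open scoped Classical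

/-- The `m × m` diagonal matrix with `(−1)^{j+1}` (1-based) on the diagonal. -/
def Ialt (m : ℕ) : Matrix (Fin m) (Fin m) ℂ :=
  Matrix.of fun i j => if i = j then (-1 : ℂ) ^ (i : ℕ) else 0


-- generic collapse
lemma collapse {m : ℕ} (f g : Fin m → ℂ) (c : ℕ)
    (hf : ∀ k : Fin m, f k = if (k:ℕ) = c then g k else 0) :
    ∑ k : Fin m, f k = if h : c < m then g ⟨c, h⟩ else 0 := by
  by_cases h : c < m
  · rw [dif_pos h, Finset.sum_eq_single (⟨c, h⟩ : Fin m)]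
    · rw [hf]; simp
    · intro b _ hb
      rw [hf]
      have : (b : ℕ) ≠ c := fun hbc => hb (Fin.ext hbc)
      simp [this]
    · simp
  · rw [dif_neg h]
    apply Finset.sum_eq_zero
    intro k _
    rw [hf]
    have : (k : ℕ) ≠ c := by omega
    simp [this]

lemma Jb0_apply {m : ℕ} (i j : Fin m) :
    Jb 0 m i j = if (j:ℕ) = (i:ℕ) + 1 then 1 else 0 := by
  simp only [Jb, Matrix.of_apply]
  split_ifs with h1 h2 <;> first | rfl | omega

lemma Jpow_apply {m : ℕ} (e : ℕ) (i j : Fin m) :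
    (Jb 0 m ^ e) i j = if (j:ℕ) = (i:ℕ) + e then 1 else 0 := by
  induction e generalizing i j with
  | zero => simp [Matrix.one_apply, Fin.ext_iff, eq_comm]
  | succ e ih =>
    rw [pow_succ, Matrix.mul_apply]
    rw [collapse _ (fun k => Jb 0 m k j) ((i:ℕ) + e)
      (fun k => by rw [ih]; split_ifs <;> simp_all)]
    by_cases h : (i:ℕ) + e < m
    · rw [dif_pos h, Jb0_apply]
      rfl
    · rw [dif_neg h]
      have : ¬ ((j:ℕ) = (i:ℕ) + (e+1)) := by omega
      simp [this]

lemma Ialt_diag (m : ℕ) : Ialt m = Matrix.diagonal (fun i : Fin m => (-1:ℂ)^(i:ℕ)) := by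
  ext i j
  simp [Ialt, Matrix.diagonal]

lemma JS_apply {m : ℕ} (i j : Fin m) :
    (Jb 0 m * Sb m) i j = if (i:ℕ) + (j:ℕ) + 2 = m then 1 else 0 := by
  rw [Matrix.mul_apply]
  rw [collapse _ (fun k => Sb m k j) ((i:ℕ)+1)
    (fun k => by rw [Jb0_apply]; split_ifs <;> simp_all)]
  by_cases h : (i:ℕ)+1 < m
  · rw [dif_pos h]
    simp only [Sb, Matrix.of_apply, Fin.val_mk]
    split_ifs <;> first | rfl | omega
  · rw [dif_neg h]
    have : ¬ ((i:ℕ) + (j:ℕ) + 2 = m) := by omega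
    simp [this]

lemma SJ_apply {m : ℕ} (i j : Fin m) :
    (Sb m * Jb 0 m) i j = if (i:ℕ) + (j:ℕ) = m then 1 else 0 := by
  rw [Matrix.mul_apply]
  rw [collapse _ (fun k => Jb 0 m k j) (m - 1 - (i:ℕ))
    (fun k => by
      have hk := k.isLt
      have hi := i.isLt
      simp only [Sb, Matrix.of_apply]
      split_ifs <;> first | (exfalso; omega) | simp)]
  by_cases h : m - 1 - (i:ℕ) < m
  · rw [dif_pos h, Jb0_apply]
    simp only [Fin.val_mk]
    split_ifs <;> first | rfl | omega
  · rw [dif_neg h]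
    have : ¬ ((i:ℕ) + (j:ℕ) = m) := by omega
    simp [this]

section NatLevel
variable (m : ℕ) (x : ℕ → ℕ → ℂ)
variable (hz : ∀ i j, (m ≤ i ∨ m ≤ j) → x i j = 0)
variable (hR1 : ∀ j, j + 1 < m → x (m-1) j = 0)
variable (hR2 : ∀ i, 1 ≤ i → i < m → x i 0 = 0)
variable (hR3 : ∀ i j, i + 2 ≤ m → j + 2 ≤ m → x i j + x (m-2-j) (m-2-i) = 0)
variable (hR4 : ∀ i j, 1 ≤ i → i < m → 1 ≤ j → j < m → x i j + x (m-j) (m-i) = 0)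

include hR3 hR4 in
lemma shiftS : ∀ i j, i + 3 ≤ m → j + 3 ≤ m → x i j = x (i+2) (j+2) := by
  intro i j hi hj
  have h3 := hR3 i j (by omega) (by omega)
  have h4 := hR4 (m-2-j) (m-2-i) (by omega) (by omega) (by omega) (by omega)
  rw [show m - (m-2-i) = i + 2 from by omega, show m - (m-2-j) = j + 2 from by omega] at h4
  linear_combination h3 - h4

include hR3 hR4 in
lemma constT : ∀ n i j, i + 2*n < m → j + 2*n < m → x i j = x (i+2*n) (j+2*n) := by
  intro n
  induction n with
  | zero => simp
  | succ n ih =>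
    intro i j hi hj
    have h1 : x i j = x (i+2) (j+2) := shiftS m x hR3 hR4 i j (by omega) (by omega)
    rw [h1, ih (i+2) (j+2) (by omega) (by omega)]
    congr 1 <;> omega

include hz hR1 hR2 hR3 hR4 in
lemma zeroBelow : ∀ i j, j < i → x i j = 0 := by
  intro i j hji
  by_cases him : i < m
  swap
  · exact hz i j (Or.inl (by omega))
  have hjm : j < m := by omega
  rcases Nat.even_or_odd j with ⟨n, hn⟩ | ⟨n, hn⟩
  · -- j = 2n even
    have hc : x (i-j) 0 = x i j := by
      have := constT m x hR3 hR4 n (i-j) 0 (by omega) (by omega)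
      rw [this]; congr 1 <;> omega
    rw [← hc]
    exact hR2 (i-j) (by omega) (by omega)
  · -- j = 2n+1 odd
    have hm2 : 2 ≤ m := by omega
    have hc : x (i-j+1) 1 = x i j := by
      have := constT m x hR3 hR4 n (i-j+1) 1 (by omega) (by omega)
      rw [this]; congr 1 <;> omega
    rw [← hc]
    have h4 := hR4 (i-j+1) 1 (by omega) (by omega) (by omega) (by omega)
    have h1 := hR1 (m - (i-j+1)) (by omega)
    rw [show m - 1 = m - 1 from rfl] at h1
    have : x (m-1) (m - (i-j+1)) = 0 := h1
    linear_combination h4 - this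

include hz hR3 hR4 in
lemma zeroPar : ∀ i j, i ≤ j → j < m → (j - i) % 2 = m % 2 → x i j = 0 := by
  intro i j hij hjm hpar
  set d := j - i with hd
  have hdm : d + 2 ≤ m := by omega
  obtain ⟨t, ht⟩ : ∃ t, m = 2*t + 2 + d := by
    have : (m - d) % 2 = 0 := by omega
    exact ⟨(m - 2 - d)/2, by omega⟩
  -- zero at (t, t+d)
  have z1 : x t (t+d) = 0 := by
    have h3 := hR3 t (t+d) (by omega) (by omega)
    rw [show m - 2 - (t+d) = t from by omega, show m - 2 - t = t + d from by omega] at h3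
    linear_combination h3 / 2
  -- zero at (t+1, t+1+d)
  have z2 : x (t+1) (t+1+d) = 0 := by
    have h4 := hR4 (t+1) (t+1+d) (by omega) (by omega) (by omega) (by omega)
    rw [show m - (t+1+d) = t+1 from by omega, show m - (t+1) = t+1+d from by omega] at h4
    linear_combination h4 / 2
  -- connect
  have key : ∀ a, a < m → a + d < m → a % 2 = i % 2 → x a (a+d) = 0 → x i j = 0 := by
    intro a ham hadm hpar2 hza
    rcases le_or_gt i a with hle | hlt
    · obtain ⟨n, hn⟩ : ∃ n, a = i + 2*n := ⟨(a-i)/2, by omega⟩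
      have := constT m x hR3 hR4 n i j (by omega) (by omega)
      rw [this, show i + 2*n = a from by omega, show j + 2*n = a + d from by omega]
      exact hza
    · obtain ⟨n, hn⟩ : ∃ n, i = a + 2*n := ⟨(i-a)/2, by omega⟩
      have := constT m x hR3 hR4 n a (a+d) (by omega) (by omega)
      rw [this] at hza
      rw [show a + 2*n = i from by omega, show a + d + 2*n = j from by omega] at hza
      exact hza
  rcases Nat.even_or_odd (i + t) with ⟨c, hc⟩ | ⟨c, hc⟩
  · exact key t (by omega) (by omega) (by omega) z1
  · exact key (t+1) (by omega) (by omega) (by omega) z2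

include hz hR3 hR4 in
lemma valGood : ∀ i j, i ≤ j → j < m → (j - i) % 2 = (m+1) % 2 →
    x i j = (-1:ℂ)^i * x 0 (j - i) := by
  intro i j hij hjm hpar
  set d := j - i with hd
  rcases Nat.even_or_odd i with ⟨n, hn⟩ | ⟨n, hn⟩
  · have := constT m x hR3 hR4 n 0 d (by omega) (by omega)
    rw [show (0:ℕ) + 2*n = i from by omega, show d + 2*n = j from by omega] at this
    rw [← this, hn, show n + n = 2 * n from by omega, pow_mul]
    norm_num
  · -- i odd
    have hd3 : d + 3 ≤ m := by omega
    obtain ⟨t, ht⟩ : ∃ t, m = d + 3 + 2*t := ⟨(m - 3 - d)/2, by omega⟩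
    have step1 : x 1 (1+d) = - x 0 d := by
      have h3 := hR3 0 d (by omega) (by omega)
      have hc := constT m x hR3 hR4 t 1 (1+d) (by omega) (by omega)
      rw [show (1:ℕ) + 2*t = m - 2 - d from by omega,
        show 1 + d + 2*t = m - 2 from by omega] at hc
      rw [show m - 2 - 0 = m - 2 from by omega] at h3
      rw [hc]
      linear_combination h3
    have step2 : x i j = x 1 (1+d) := by
      have := constT m x hR3 hR4 n 1 (1+d) (by omega) (by omega)
      rw [this, show (1:ℕ) + 2*n = i from by omega, show 1 + d + 2*n = j from by omega]
    rw [step2, step1, hn, pow_succ, pow_mul]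
    norm_num

include hz hR1 hR2 hR3 hR4 in
lemma mainChar : ∀ i j, x i j =
    if i ≤ j ∧ j < m ∧ (j - i) % 2 = (m+1) % 2 then (-1:ℂ)^i * x 0 (j-i) else 0 := by
  intro i j
  split_ifs with h
  · exact valGood m x hz hR3 hR4 i j h.1 h.2.1 h.2.2
  · by_cases hij : i ≤ j
    · by_cases hjm : j < m
      · have hpar : (j - i) % 2 = m % 2 := by omega
        exact zeroPar m x hz hR3 hR4 i j hij hjm hpar
      · exact hz i j (Or.inr (by omega))
    · exact zeroBelow m x hz hR1 hR2 hR3 hR4 i j (by omega)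

end NatLevel

section MatLevel
variable {m : ℕ} (X : Matrix (Fin m) (Fin m) ℂ)

def extx (X : Matrix (Fin m) (Fin m) ℂ) : ℕ → ℕ → ℂ :=
  fun i j => if h : i < m ∧ j < m then X ⟨i, h.1⟩ ⟨j, h.2⟩ else 0

lemma extx_lt (i j : ℕ) (hi : i < m) (hj : j < m) :
    extx X i j = X ⟨i,hi⟩ ⟨j,hj⟩ := dif_pos ⟨hi,hj⟩

lemma extx_zero : ∀ i j, m ≤ i ∨ m ≤ j → extx X i j = 0 :=
  fun i j h => dif_neg (by omega)

lemma hE1 (heq1 : X * (Jb 0 m * Sb m) + Jb 0 m * Sb m * Xᵀ = 0) (i j : ℕ)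
    (hi : i < m) (hj : j < m) :
    (if j + 2 ≤ m then extx X i (m-2-j) else 0)
      + (if i + 2 ≤ m then extx X j (m-2-i) else 0) = 0 := by
  have E := congrFun (congrFun heq1 ⟨i,hi⟩) ⟨j,hj⟩
  set P := Jb 0 m * Sb m with hP
  simp only [Matrix.add_apply, Matrix.mul_apply, Matrix.transpose_apply,
    Matrix.zero_apply] at E
  rw [collapse _ (fun c => X ⟨i,hi⟩ c) (if j + 2 ≤ m then m-2-j else m) (fun c => by
      rw [hP, JS_apply]
      have := c.isLt
      simp only [Fin.val_mk]
      split_ifs <;> first | (exfalso; omega) | simp)] at E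
  rw [collapse _ (fun c => X ⟨j,hj⟩ c) (if i + 2 ≤ m then m-2-i else m) (fun c => by
      rw [hP, JS_apply]
      have := c.isLt
      simp only [Fin.val_mk]
      split_ifs <;> first | (exfalso; omega) | simp)] at E
  by_cases h1 : j + 2 ≤ m <;> by_cases h2 : i + 2 ≤ m <;>
    simp only [h1, h2, if_true, if_false] at E ⊢ <;>
    [skip; skip; skip; norm_num] <;>
    first
    | (rw [dif_pos (show m-2-j < m by omega), dif_pos (show m-2-i < m by omega)] at E
       rw [extx_lt X i (m-2-j) hi (by omega), extx_lt X j (m-2-i) hj (by omega)]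
       exact E)
    | (rw [dif_pos (show m-2-j < m by omega), dif_neg (show ¬ (m < m) by omega)] at E
       rw [extx_lt X i (m-2-j) hi (by omega)]
       simpa using E)
    | (rw [dif_neg (show ¬ (m < m) by omega), dif_pos (show m-2-i < m by omega)] at E
       rw [extx_lt X j (m-2-i) hj (by omega)]
       simpa using E)

lemma hE2 (heq2 : Xᵀ * (Sb m * Jb 0 m) + Sb m * Jb 0 m * X = 0) (i j : ℕ)
    (hi : i < m) (hj : j < m) :
    (if 1 ≤ j then extx X (m-j) i else 0)
      + (if 1 ≤ i then extx X (m-i) j else 0) = 0 := by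
  have E := congrFun (congrFun heq2 ⟨i,hi⟩) ⟨j,hj⟩
  set Q := Sb m * Jb 0 m with hQ
  simp only [Matrix.add_apply, Matrix.mul_apply, Matrix.transpose_apply,
    Matrix.zero_apply] at E
  rw [collapse _ (fun c => X c ⟨i,hi⟩) (if 1 ≤ j then m-j else m) (fun c => by
      rw [hQ, SJ_apply]
      have := c.isLt
      simp only [Fin.val_mk]
      split_ifs <;> first | (exfalso; omega) | simp)] at E
  rw [collapse _ (fun c => X c ⟨j,hj⟩) (if 1 ≤ i then m-i else m) (fun c => by
      rw [hQ, SJ_apply]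
      have := c.isLt
      simp only [Fin.val_mk]
      split_ifs <;> first | (exfalso; omega) | simp)] at E
  by_cases h1 : 1 ≤ j <;> by_cases h2 : 1 ≤ i <;>
    simp only [h1, h2, if_true, if_false] at E ⊢ <;>
    [skip; skip; skip; norm_num] <;>
    first
    | (rw [dif_pos (show m-j < m by omega), dif_pos (show m-i < m by omega)] at E
       rw [extx_lt X (m-j) i (by omega) hi, extx_lt X (m-i) j (by omega) hj]
       exact E)
    | (rw [dif_pos (show m-j < m by omega), dif_neg (show ¬ (m < m) by omega)] at E
       rw [extx_lt X (m-j) i (by omega) hi]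
       simpa using E)
    | (rw [dif_neg (show ¬ (m < m) by omega), dif_pos (show m-i < m by omega)] at E
       rw [extx_lt X (m-i) j (by omega) hj]
       simpa using E)

end MatLevel

-- helper about signs
lemma neg_pow_add_eq_zero {p q : ℕ} (h : (p+q) % 2 = 1) : (-1:ℂ)^p + (-1)^q = 0 := by
  rcases Nat.even_or_odd p with hp | hp
  · have hq : Odd q := Nat.odd_iff.mpr (by rw [Nat.even_iff] at hp; omega)
    rw [Even.neg_one_pow hp, Odd.neg_one_pow hq]
    ring
  · have hq : Even q := Nat.even_iff.mpr (by rw [Nat.odd_iff] at hp; omega)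
    rw [Odd.neg_one_pow hp, Even.neg_one_pow hq]
    ring

section Gen
variable {m : ℕ}

lemma G_apply (e : ℕ) (i j : Fin m) :
    (Jb 0 m ^ e * Ialt m) i j
      = if (j:ℕ) = (i:ℕ) + e then (-1:ℂ)^(j:ℕ) else 0 := by
  rw [Ialt_diag, Matrix.mul_diagonal, Jpow_apply]
  split_ifs <;> simp

lemma Gen1 (e t : ℕ) (hm : m = e + 2*t + 1) :
    (Jb 0 m ^ e * Ialt m) * (Jb 0 m * Sb m)
      + Jb 0 m * Sb m * (Jb 0 m ^ e * Ialt m)ᵀ = 0 := by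
  ext i j
  set G := Jb 0 m ^ e * Ialt m with hG
  set P := Jb 0 m * Sb m with hP
  simp only [Matrix.add_apply, Matrix.mul_apply, Matrix.transpose_apply,
    Matrix.zero_apply]
  rw [collapse _ (fun c => (-1:ℂ)^(c:ℕ)) (if (i:ℕ)+e+(j:ℕ)+2 = m then (i:ℕ)+e else m)
    (fun c => by
      rw [hG, hP, G_apply, JS_apply]
      have := c.isLt
      split_ifs <;> first | (exfalso; omega) | simp)]
  rw [collapse _ (fun c => (-1:ℂ)^(c:ℕ)) (if (i:ℕ)+(j:ℕ)+e+2 = m then (j:ℕ)+e else m)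
    (fun c => by
      rw [hG, hP, G_apply, JS_apply]
      have := c.isLt
      split_ifs <;> first | (exfalso; omega) | simp)]
  by_cases hc : (i:ℕ)+(j:ℕ)+e+2 = m
  · rw [if_pos (show (i:ℕ)+e+(j:ℕ)+2 = m by omega), if_pos hc,
      dif_pos (show (i:ℕ)+e < m by omega), dif_pos (show (j:ℕ)+e < m by omega)]
    simp only [Fin.val_mk]
    exact neg_pow_add_eq_zero (by omega)
  · rw [if_neg (show ¬ ((i:ℕ)+e+(j:ℕ)+2 = m) by omega), if_neg hc]
    simp

lemma Gen2 (e t : ℕ) (hm : m = e + 2*t + 1) :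
    (Jb 0 m ^ e * Ialt m)ᵀ * (Sb m * Jb 0 m)
      + Sb m * Jb 0 m * (Jb 0 m ^ e * Ialt m) = 0 := by
  ext i j
  set G := Jb 0 m ^ e * Ialt m with hG
  set Q := Sb m * Jb 0 m with hQ
  simp only [Matrix.add_apply, Matrix.mul_apply, Matrix.transpose_apply,
    Matrix.zero_apply]
  rw [collapse _ (fun _ => (-1:ℂ)^(i:ℕ)) (if (i:ℕ)+(j:ℕ) = m + e then (i:ℕ)-e else m)
    (fun c => by
      rw [hG, hQ, G_apply, SJ_apply]
      have := c.isLt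
      have := i.isLt
      split_ifs <;> first | (exfalso; omega) | simp)]
  rw [collapse _ (fun _ => (-1:ℂ)^(j:ℕ)) (if (i:ℕ)+(j:ℕ) = m + e then (j:ℕ)-e else m)
    (fun c => by
      rw [hG, hQ, G_apply, SJ_apply]
      have := c.isLt
      have := j.isLt
      split_ifs <;> first | (exfalso; omega) | simp)]
  by_cases hc : (i:ℕ)+(j:ℕ) = m + e
  · have hi := i.isLt
    have hj := j.isLt
    rw [if_pos hc, if_pos hc, dif_pos (show (i:ℕ)-e < m by omega),
      dif_pos (show (j:ℕ)-e < m by omega)]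
    exact neg_pow_add_eq_zero (by omega)
  · rw [if_neg hc, if_neg hc]
    simp

end Gen

-- ## assembly
section Assembly
variable {m : ℕ}

def psiFun (m : ℕ) (a : Fin ((m+1)/2) → ℂ) : Matrix (Fin m) (Fin m) ℂ :=
  (∑ k : Fin ((m + 1) / 2), a k • Jb 0 m ^ (m - 2 * (k : ℕ) - 1)) * Ialt m

lemma psiFun_eq_sum (a : Fin ((m+1)/2) → ℂ) :
    psiFun m a = ∑ k : Fin ((m+1)/2), a k • (Jb 0 m ^ (m - 2*(k:ℕ) - 1) * Ialt m) := by
  rw [psiFun, Finset.sum_mul]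
  exact Finset.sum_congr rfl fun k _ => Matrix.smul_mul _ _ _

lemma psiFun_apply (a : Fin ((m+1)/2) → ℂ) (i j : Fin m) :
    psiFun m a i j = ∑ k : Fin ((m+1)/2),
      a k * (if (j:ℕ) = (i:ℕ) + (m - 2*(k:ℕ) - 1) then (-1:ℂ)^(j:ℕ) else 0) := by
  rw [psiFun_eq_sum, Matrix.sum_apply]
  exact Finset.sum_congr rfl fun k _ => by rw [Matrix.smul_apply, G_apply, smul_eq_mul]

lemma hR1x (X : Matrix (Fin m) (Fin m) ℂ)
    (heq1 : X * (Jb 0 m * Sb m) + Jb 0 m * Sb m * Xᵀ = 0) :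
    ∀ j, j + 1 < m → extx X (m-1) j = 0 := by
  intro j hj
  have h := hE1 X heq1 (m-1) (m-2-j) (by omega) (by omega)
  rw [if_pos (by omega), if_neg (by omega), show m-2-(m-2-j) = j from by omega,
    add_zero] at h
  exact h

lemma hR2x (X : Matrix (Fin m) (Fin m) ℂ)
    (heq2 : Xᵀ * (Sb m * Jb 0 m) + Sb m * Jb 0 m * X = 0) :
    ∀ i, 1 ≤ i → i < m → extx X i 0 = 0 := by
  intro i h1 h2
  have h := hE2 X heq2 (m-i) 0 (by omega) (by omega)
  rw [if_neg (by omega), if_pos (by omega), show m-(m-i) = i from by omega,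
    zero_add] at h
  exact h

lemma hR3x (X : Matrix (Fin m) (Fin m) ℂ)
    (heq1 : X * (Jb 0 m * Sb m) + Jb 0 m * Sb m * Xᵀ = 0) :
    ∀ i j, i + 2 ≤ m → j + 2 ≤ m →
      extx X i j + extx X (m-2-j) (m-2-i) = 0 := by
  intro i j hi hj
  have h := hE1 X heq1 i (m-2-j) (by omega) (by omega)
  rw [if_pos (by omega), if_pos (by omega), show m-2-(m-2-j) = j from by omega] at h
  exact h

lemma hR4x (X : Matrix (Fin m) (Fin m) ℂ)
    (heq2 : Xᵀ * (Sb m * Jb 0 m) + Sb m * Jb 0 m * X = 0) :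
    ∀ i j, 1 ≤ i → i < m → 1 ≤ j → j < m →
      extx X i j + extx X (m-j) (m-i) = 0 := by
  intro i j h1i him h1j hjm
  have h := hE2 X heq2 j (m-i) (by omega) (by omega)
  rw [if_pos (by omega), if_pos (by omega), show m-(m-i) = i from by omega] at h
  exact h

lemma forwardRep (hm : 0 < m) (X : Matrix (Fin m) (Fin m) ℂ)
    (heq1 : X * (Jb 0 m * Sb m) + Jb 0 m * Sb m * Xᵀ = 0)
    (heq2 : Xᵀ * (Sb m * Jb 0 m) + Sb m * Jb 0 m * X = 0) :
    X = psiFun m (fun k =>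
      (-1:ℂ)^((m - 2*(k:ℕ) - 1)) * extx X 0 (m - 2*(k:ℕ) - 1)) := by
  have main := mainChar m (extx X) (extx_zero X) (hR1x X heq1) (hR2x X heq2)
    (hR3x X heq1) (hR4x X heq2)
  ext i j
  rw [psiFun_apply]
  have hX : X i j = extx X (i:ℕ) (j:ℕ) := by rw [extx_lt X _ _ i.isLt j.isLt]
  rw [hX, main (i:ℕ) (j:ℕ)]
  have hjm := j.isLt
  have him := i.isLt
  by_cases hgood : (i:ℕ) ≤ (j:ℕ) ∧ ((j:ℕ) - (i:ℕ)) % 2 = (m+1) % 2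
  · rw [if_pos ⟨hgood.1, hjm, hgood.2⟩]
    have hk0lt : (m - 1 - ((j:ℕ) - (i:ℕ))) / 2 < (m+1)/2 := by omega
    rw [Finset.sum_eq_single (⟨(m - 1 - ((j:ℕ)-(i:ℕ)))/2, hk0lt⟩ : Fin ((m+1)/2))]
    · rw [if_pos (by simp only [Fin.val_mk]; omega)]
      simp only [Fin.val_mk]
      rw [show m - 2*((m - 1 - ((j:ℕ)-(i:ℕ)))/2) - 1 = (j:ℕ) - (i:ℕ) from by omega]
      have hs : (-1:ℂ)^((j:ℕ)-(i:ℕ)) * (-1)^(j:ℕ) = (-1)^(i:ℕ) := by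
        rw [← pow_add, show (j:ℕ) - (i:ℕ) + (j:ℕ) = 2*((j:ℕ)-(i:ℕ)) + (i:ℕ) from by omega,
          pow_add, pow_mul]
        norm_num
      linear_combination (-(extx X 0 ((j:ℕ)-(i:ℕ)))) * hs
    · intro b _ hb
      have hbne : (b:ℕ) ≠ (m - 1 - ((j:ℕ)-(i:ℕ)))/2 := fun hh => hb (Fin.ext hh)
      have hblt := b.isLt
      rw [if_neg (by omega), mul_zero]
    · intro hmem
      exact absurd (Finset.mem_univ _) hmem
  · rw [if_neg (by omega)]
    symm
    apply Finset.sum_eq_zero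
    intro b _
    have hblt := b.isLt
    rw [if_neg (by omega), mul_zero]

lemma backward1 (hm : 0 < m) (a : Fin ((m+1)/2) → ℂ) :
    psiFun m a * (Jb 0 m * Sb m) + Jb 0 m * Sb m * (psiFun m a)ᵀ = 0 := by
  rw [psiFun_eq_sum, Finset.sum_mul, Matrix.transpose_sum, Matrix.mul_sum,
    ← Finset.sum_add_distrib]
  apply Finset.sum_eq_zero
  intro k _
  have hblt := k.isLt
  rw [Matrix.smul_mul, Matrix.transpose_smul, Matrix.mul_smul, ← smul_add,
    Gen1 (m - 2*(k:ℕ) - 1) (k:ℕ) (by omega), smul_zero]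

lemma backward2 (hm : 0 < m) (a : Fin ((m+1)/2) → ℂ) :
    (psiFun m a)ᵀ * (Sb m * Jb 0 m) + Sb m * Jb 0 m * psiFun m a = 0 := by
  rw [psiFun_eq_sum, Matrix.transpose_sum, Finset.sum_mul, Matrix.mul_sum,
    ← Finset.sum_add_distrib]
  apply Finset.sum_eq_zero
  intro k _
  have hblt := k.isLt
  rw [Matrix.transpose_smul, Matrix.smul_mul, Matrix.mul_smul, ← smul_add,
    Gen2 (m - 2*(k:ℕ) - 1) (k:ℕ) (by omega), smul_zero]

lemma psiFun_inj (hm : 0 < m) (a : Fin ((m+1)/2) → ℂ) (h : psiFun m a = 0) :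
    a = 0 := by
  funext k
  have hk := k.isLt
  have hlt : m - 2*(k:ℕ) - 1 < m := by omega
  have hE := congrFun (congrFun h ⟨0, hm⟩) ⟨m - 2*(k:ℕ) - 1, hlt⟩
  rw [psiFun_apply, Matrix.zero_apply] at hE
  rw [Finset.sum_eq_single k] at hE
  · rw [if_pos (by simp only [Fin.val_mk]; omega)] at hE
    have hne : (-1:ℂ)^((⟨m - 2*(k:ℕ) - 1, hlt⟩ : Fin m):ℕ) ≠ 0 :=
      pow_ne_zero _ (by norm_num)
    have := mul_eq_zero.mp hE
    simp only [Pi.zero_apply]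
    tauto
  · intro b _ hb
    have hbne : (b:ℕ) ≠ (k:ℕ) := fun hh => hb (Fin.ext hh)
    have hblt := b.isLt
    rw [if_neg (by simp only [Fin.val_mk]; omega), mul_zero]
  · intro hmem
    exact absurd (Finset.mem_univ _) hmem

def psiL (m : ℕ) : (Fin ((m+1)/2) → ℂ) →ₗ[ℂ] Matrix (Fin m) (Fin m) ℂ where
  toFun a := psiFun m a
  map_add' a b := by
    simp only [psiFun, add_smul, Finset.sum_add_distrib, Matrix.add_mul, Pi.add_apply]
  map_smul' c a := by
    simp only [psiFun, Pi.smul_apply, smul_eq_mul, RingHom.id_apply, ← Matrix.smul_mul,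
      Finset.smul_sum, smul_smul]


end Assembly

/-- The solutions `X` of `X·T_m·S_m + T_m·S_m·Xᵀ = 0` and
`Xᵀ·S_m·T_m + S_m·T_m·X = 0` are exactly the matrices
`(Σ_{k=1}^{⌈m/2⌉} a_k·T_m^{m−2k+1})·I_alt`; in particular this space has
dimension `⌈m/2⌉`. -/
theorem stmt6 (m : ℕ) (hm : 0 < m) :
    (∀ X : Matrix (Fin m) (Fin m) ℂ,
      (X * (Jb 0 m * Sb m) + Jb 0 m * Sb m * Xᵀ = 0 ∧
        Xᵀ * (Sb m * Jb 0 m) + Sb m * Jb 0 m * X = 0) ↔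
      ∃ a : Fin ((m + 1) / 2) → ℂ,
        X = (∑ k : Fin ((m + 1) / 2), a k • Jb 0 m ^ (m - 2 * (k : ℕ) - 1)) * Ialt m) ∧
    Module.finrank ℂ
      ↥(LinearMap.ker (rmap (Jb 0 m * Sb m)) ⊓ LinearMap.ker (lmap (Sb m * Jb 0 m)))
      = (m + 1) / 2 := by
  constructor
  · intro X
    constructor
    · rintro ⟨heq1, heq2⟩
      exact ⟨_, forwardRep hm X heq1 heq2⟩
    · rintro ⟨a, rfl⟩
      exact ⟨backward1 hm a, backward2 hm a⟩
  · have hK : (LinearMap.ker (rmap (Jb 0 m * Sb m)) ⊓ LinearMap.ker (lmap (Sb m * Jb 0 m)))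
        = LinearMap.range (psiL m) := by
      ext X
      simp only [Submodule.mem_inf, LinearMap.mem_ker, LinearMap.mem_range]
      constructor
      · rintro ⟨k1, k2⟩
        have heq1 : X * (Jb 0 m * Sb m) + Jb 0 m * Sb m * Xᵀ = 0 := k1
        have heq2 : Xᵀ * (Sb m * Jb 0 m) + Sb m * Jb 0 m * X = 0 := k2
        exact ⟨_, (forwardRep hm X heq1 heq2).symm⟩
      · rintro ⟨a, rfl⟩
        exact ⟨backward1 hm a, backward2 hm a⟩
    rw [hK]
    have hinj : Function.Injective (psiL m) := by
      intro a b hab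
      have h0 : psiL m (a - b) = 0 := by rw [map_sub, hab, sub_self]
      have := psiFun_inj hm (a - b) h0
      exact sub_eq_zero.mp this
    rw [LinearMap.finrank_range_of_inj hinj]
    simp [Module.finrank_fintype_fun_eq_card]
end
end

section
/- Let λ be a nonzero normalized complex number such that λ² is not a negative real number (equivalently, λ is a positive real or λ² ∉ ℝ), let m be a positive integer, and set M = M_{λ,m} and N = N_{λ,m}. The only complex matrix X (of the same size as M) satisfying X·M·N + M·N·Xᵀ = 0 and Xᵀ·N·conj(M) + N·conj(M)·X = 0 is X = 0. -/
open Matrix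

noncomputable section

open scoped Classical

set_option maxHeartbeats 1000000

def Jmat (μ : ℂ) (n : ℕ) : Matrix (Fin n) (Fin n) ℂ :=
  Matrix.of fun i j => if (j : ℕ) = (i : ℕ) then μ else if (j : ℕ) = (i : ℕ) + 1 then 1 else 0

namespace S7
variable {n : ℕ}

def ext (X : Matrix (Fin n) (Fin n) ℂ) (i j : ℤ) : ℂ :=
  if h : 0 ≤ i ∧ i < n ∧ 0 ≤ j ∧ j < n then
    X ⟨i.toNat, by omega⟩ ⟨j.toNat, by omega⟩ else 0

lemma ext_coe (X : Matrix (Fin n) (Fin n) ℂ) (i j : Fin n) :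
    ext X (i : ℕ) (j : ℕ) = X i j := by
  have hi := i.2; have hj := j.2
  rw [ext, dif_pos (by refine ⟨by positivity, ?_, by positivity, ?_⟩ <;> exact_mod_cast ‹_›)]
  congr 1 <;> simp [Fin.ext_iff]

lemma ext_zero (X : Matrix (Fin n) (Fin n) ℂ) {i j : ℤ}
    (h : i < 0 ∨ (n:ℤ) ≤ i ∨ j < 0 ∨ (n:ℤ) ≤ j) : ext X i j = 0 := by
  rw [ext, dif_neg (by omega)]

lemma sum_if_eq (g : Fin n → ℂ) (c : ℕ) :
    (∑ k : Fin n, if (k:ℕ) = c then g k else 0) = if h : c < n then g ⟨c, h⟩ else 0 := by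
  split_ifs with h
  · rw [Finset.sum_eq_single (⟨c, h⟩ : Fin n)]
    · simp
    · intro k _ hk
      rw [if_neg (by simpa [Fin.ext_iff] using hk)]
    · simp
  · apply Finset.sum_eq_zero; intro k _
    rw [if_neg (by have := k.2; omega)]

lemma ext_eq_dite (X : Matrix (Fin n) (Fin n) ℂ) (c : ℕ) (j : Fin n) :
    ext X (c : ℤ) (j : ℕ) = if h : c < n then X ⟨c, h⟩ j else 0 := by
  split_ifs with h
  · exact ext_coe X ⟨c, h⟩ j
  · exact ext_zero X (by omega)

lemma ext_eq_dite' (X : Matrix (Fin n) (Fin n) ℂ) (i : Fin n) (c : ℕ) :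
    ext X (i : ℕ) (c : ℤ) = if h : c < n then X i ⟨c, h⟩ else 0 := by
  split_ifs with h
  · exact ext_coe X i ⟨c, h⟩
  · exact ext_zero X (by omega)

/-- entry of `A * Jmat μ n` -/
lemma mul_J (μ : ℂ) (A : Matrix (Fin n) (Fin n) ℂ) (i j : Fin n) :
    (A * Jmat μ n) i j = μ * ext A i j + ext A i ((j : ℕ) - 1 : ℤ) := by
  rw [Matrix.mul_apply]
  have : ∀ k : Fin n, A i k * Jmat μ n k j
      = (if (k:ℕ) = (j:ℕ) then μ * A i k else 0)
        + (if (k:ℕ) = (j:ℕ) - 1 ∧ 1 ≤ (j:ℕ) then A i k else 0) := by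
    intro k
    simp only [Jmat, Matrix.of_apply]
    split_ifs <;> first | ring1 | omega | (exfalso; omega)
  rw [Finset.sum_congr rfl (fun k _ => this k), Finset.sum_add_distrib]
  congr 1
  · have := sum_if_eq (fun k => μ * A i k) (j : ℕ)
    rw [this, dif_pos j.2, ext_coe]
  · rcases Nat.eq_zero_or_pos (j : ℕ) with hj | hj
    · rw [ext_zero A (by omega)]
      apply Finset.sum_eq_zero; intro k _; rw [if_neg (by omega)]
    · have h1 : ∀ k : Fin n, (if (k:ℕ) = (j:ℕ) - 1 ∧ 1 ≤ (j:ℕ) then A i k else 0)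
          = (if (k:ℕ) = (j:ℕ) - 1 then A i k else 0) := by
        intro k; split_ifs <;> first | rfl | omega
      rw [Finset.sum_congr rfl (fun k _ => h1 k), sum_if_eq, dif_pos (by omega : (j:ℕ)-1 < n)]
      have h2 : ((j:ℕ) : ℤ) - 1 = (((j:ℕ) - 1 : ℕ) : ℤ) := by omega
      rw [h2, ext_eq_dite', dif_pos]

/-- entry of `Jmat μ n * A` -/
lemma J_mul (μ : ℂ) (A : Matrix (Fin n) (Fin n) ℂ) (i j : Fin n) :
    (Jmat μ n * A) i j = μ * ext A i j + ext A ((i : ℕ) + 1 : ℤ) j := by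
  rw [Matrix.mul_apply]
  have : ∀ k : Fin n, Jmat μ n i k * A k j
      = (if (k:ℕ) = (i:ℕ) then μ * A k j else 0)
        + (if (k:ℕ) = (i:ℕ) + 1 then A k j else 0) := by
    intro k
    simp only [Jmat, Matrix.of_apply]
    split_ifs <;> first | ring1 | omega | (exfalso; omega)
  rw [Finset.sum_congr rfl (fun k _ => this k), Finset.sum_add_distrib]
  congr 1
  · rw [sum_if_eq (fun k => μ * A k j), dif_pos i.2, ext_coe]
  · rw [sum_if_eq (fun k => A k j)]
    have : ((i:ℕ) : ℤ) + 1 = (((i:ℕ) + 1 : ℕ) : ℤ) := by push_cast; ring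
    rw [this, ext_eq_dite]

/-- entry of `A * Sb n` -/
lemma mul_S (A : Matrix (Fin n) (Fin n) ℂ) (i j : Fin n) :
    (A * Sb n) i j = ext A i ((n : ℤ) - 1 - (j:ℕ)) := by
  rw [Matrix.mul_apply]
  have : ∀ k : Fin n, A i k * Sb n k j
      = (if (k:ℕ) = n - 1 - (j:ℕ) then A i k else 0) := by
    intro k
    simp only [Sb, Matrix.of_apply]
    have := k.2; have := j.2
    split_ifs <;> first | ring1 | omega | (exfalso; omega)
  rw [Finset.sum_congr rfl (fun k _ => this k), sum_if_eq,
    dif_pos (by have := j.2; omega : n - 1 - (j:ℕ) < n)]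
  have h2 : (n : ℤ) - 1 - (j:ℕ) = ((n - 1 - (j:ℕ) : ℕ) : ℤ) := by have := j.2; omega
  rw [h2, ext_eq_dite', dif_pos]

/-- entry of `Sb n * A` -/
lemma S_mul (A : Matrix (Fin n) (Fin n) ℂ) (i j : Fin n) :
    (Sb n * A) i j = ext A ((n : ℤ) - 1 - (i:ℕ)) j := by
  rw [Matrix.mul_apply]
  have : ∀ k : Fin n, Sb n i k * A k j
      = (if (k:ℕ) = n - 1 - (i:ℕ) then A k j else 0) := by
    intro k
    simp only [Sb, Matrix.of_apply]
    have := k.2; have := i.2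
    split_ifs <;> first | ring1 | omega | (exfalso; omega)
  rw [Finset.sum_congr rfl (fun k _ => this k), sum_if_eq,
    dif_pos (by have := i.2; omega : n - 1 - (i:ℕ) < n)]
  have h2 : (n : ℤ) - 1 - (i:ℕ) = ((n - 1 - (i:ℕ) : ℕ) : ℤ) := by have := i.2; omega
  rw [h2, ext_eq_dite, dif_pos]

lemma S_mul_S : Sb n * Sb n = 1 := by
  ext i j
  rw [S_mul]
  have : (n : ℤ) - 1 - (i:ℕ) = ((n - 1 - (i:ℕ) : ℕ) : ℤ) := by have := i.2; omega
  rw [this, ext_eq_dite, dif_pos (by have := i.2; omega : n - 1 - (i:ℕ) < n)]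
  simp only [Sb, Matrix.of_apply, Matrix.one_apply]
  have hi := i.2; have hj := j.2
  by_cases hij : (i:ℕ) = (j:ℕ)
  · rw [if_pos (by omega), if_pos (Fin.ext hij)]
  · rw [if_neg (by omega), if_neg (fun h => hij (congrArg Fin.val h))]

end S7

namespace S7
variable {n : ℕ}

lemma ext_transpose (X : Matrix (Fin n) (Fin n) ℂ) (i j : ℤ) :
    ext Xᵀ i j = ext X j i := by
  unfold ext
  split_ifs with h h' h'
  · rfl
  · omega
  · omega
  · rfl

lemma mul_J_ext (μ : ℂ) (A : Matrix (Fin n) (Fin n) ℂ) {i j : ℤ} (hj : j < n) :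
    ext (A * Jmat μ n) i j = μ * ext A i j + ext A i (j - 1) := by
  by_cases h : 0 ≤ i ∧ i < n ∧ 0 ≤ j
  · obtain ⟨h1, h2, h3⟩ := h
    obtain ⟨i', rfl⟩ : ∃ i' : Fin n, i = ((i' : ℕ) : ℤ) :=
      ⟨⟨i.toNat, by omega⟩, (Int.toNat_of_nonneg h1).symm⟩
    obtain ⟨j', rfl⟩ : ∃ j' : Fin n, j = ((j' : ℕ) : ℤ) :=
      ⟨⟨j.toNat, by omega⟩, (Int.toNat_of_nonneg h3).symm⟩
    rw [ext_coe]
    exact mul_J μ A i' j'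
  · push_neg at h
    rw [ext_zero _ (by omega), ext_zero _ (by omega), ext_zero _ (by omega)]
    ring

lemma J_mul_ext (μ : ℂ) (A : Matrix (Fin n) (Fin n) ℂ) {i j : ℤ} (hi : 0 ≤ i) :
    ext (Jmat μ n * A) i j = μ * ext A i j + ext A (i + 1) j := by
  by_cases h : i < n ∧ 0 ≤ j ∧ j < n
  · obtain ⟨h1, h2, h3⟩ := h
    obtain ⟨i', rfl⟩ : ∃ i' : Fin n, i = ((i' : ℕ) : ℤ) :=
      ⟨⟨i.toNat, by omega⟩, (Int.toNat_of_nonneg hi).symm⟩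
    obtain ⟨j', rfl⟩ : ∃ j' : Fin n, j = ((j' : ℕ) : ℤ) :=
      ⟨⟨j.toNat, by omega⟩, (Int.toNat_of_nonneg h2).symm⟩
    rw [ext_coe]
    exact J_mul μ A i' j'
  · push_neg at h
    by_cases hin : i < n
    · rw [ext_zero _ (by omega), ext_zero _ (by omega), ext_zero _ (by omega)]
      ring
    · rw [ext_zero _ (by omega), ext_zero _ (by omega), ext_zero _ (by omega)]
      ring

lemma SXt_ext (X : Matrix (Fin n) (Fin n) ℂ) (a b : ℤ) :
    ext (Sb n * Xᵀ) a b = ext X b ((n:ℤ) - 1 - a) := by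
  by_cases h : 0 ≤ a ∧ a < n ∧ 0 ≤ b ∧ b < n
  · obtain ⟨h1, h2, h3, h4⟩ := h
    obtain ⟨a', rfl⟩ : ∃ a' : Fin n, a = ((a' : ℕ) : ℤ) :=
      ⟨⟨a.toNat, by omega⟩, (Int.toNat_of_nonneg h1).symm⟩
    obtain ⟨b', rfl⟩ : ∃ b' : Fin n, b = ((b' : ℕ) : ℤ) :=
      ⟨⟨b.toNat, by omega⟩, (Int.toNat_of_nonneg h3).symm⟩
    rw [ext_coe, S_mul, ext_transpose]
  · push_neg at h
    by_cases ha : 0 ≤ a ∧ a < n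
    · rw [ext_zero _ (by omega), ext_zero _ (by omega)]
    · rw [ext_zero _ (by omega), ext_zero _ (by omega)]

lemma real_case (μ : ℂ) (hμ : μ ≠ 0) (X : Matrix (Fin n) (Fin n) ℂ)
    (h1 : X * (Jmat μ n * Sb n) + Jmat μ n * Sb n * Xᵀ = 0)
    (h2 : Xᵀ * (Sb n * Jmat μ n) + Sb n * Jmat μ n * X = 0) : X = 0 := by
  rcases Nat.eq_zero_or_pos n with rfl | hn
  · ext i j; exact absurd i.2 (Nat.not_lt_zero _)
  have hSS : Sb n * Sb n = (1 : Matrix (Fin n) (Fin n) ℂ) := S_mul_S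
  have h2μ : (2 : ℂ) * μ ≠ 0 := mul_ne_zero two_ne_zero hμ
  -- X commutes with J * J
  have hC : X * (Jmat μ n * Jmat μ n) = Jmat μ n * (Jmat μ n * X) := by
    have a1 : X * (Jmat μ n * Sb n) * (Sb n * Jmat μ n)
        + Jmat μ n * Sb n * Xᵀ * (Sb n * Jmat μ n) = 0 := by
      rw [← add_mul, h1, zero_mul]
    have a2 : Jmat μ n * Sb n * (Xᵀ * (Sb n * Jmat μ n))
        + Jmat μ n * Sb n * (Sb n * Jmat μ n * X) = 0 := by
      rw [← mul_add, h2, mul_zero]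
    have hSS' : ∀ A : Matrix (Fin n) (Fin n) ℂ, Sb n * (Sb n * A) = A := by
      intro A; rw [← Matrix.mul_assoc, hSS, Matrix.one_mul]
    simp only [Matrix.mul_assoc] at a1 a2
    rw [hSS'] at a1 a2
    exact add_right_cancel ((a1.trans a2.symm.symm.symm).trans (add_comm _ _))
  -- scalar version of commuting relation
  have hstar : ∀ i j : ℤ, 0 ≤ i → i < n → 0 ≤ j → j < n →
      2*μ*ext X i (j-1) + ext X i (j-2) = 2*μ*ext X (i+1) j + ext X (i+2) j := by
    intro i j hi0 hin hj0 hjn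
    obtain ⟨i', hii⟩ : ∃ i' : Fin n, ((i' : ℕ) : ℤ) = i :=
      ⟨⟨i.toNat, by omega⟩, by simp only [Fin.val_mk]; omega⟩
    obtain ⟨j', hjj⟩ : ∃ j' : Fin n, ((j' : ℕ) : ℤ) = j :=
      ⟨⟨j.toNat, by omega⟩, by simp only [Fin.val_mk]; omega⟩
    have e : (X * (Jmat μ n * Jmat μ n)) i' j' = (Jmat μ n * (Jmat μ n * X)) i' j' := by
      rw [hC]
    rw [← Matrix.mul_assoc] at e
    rw [mul_J, J_mul] at e
    rw [hii, hjj] at e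
    rw [mul_J_ext μ X hjn, mul_J_ext μ X (show j - 1 < (n:ℤ) by omega),
      J_mul_ext μ X hi0, J_mul_ext μ X (show (0:ℤ) ≤ i + 1 by omega)] at e
    rw [show (j:ℤ)-1-1 = j-2 by ring, show (i:ℤ)+1+1 = i+2 by ring] at e
    linear_combination e
  -- the shift relation
  have hd : ∀ i j : ℤ, 0 ≤ i → i < n → 0 ≤ j → j < n →
      ext X i (j-1) = ext X (i+1) j := by
    have key : ∀ k : ℕ, ∀ i j : ℤ, 0 ≤ i → i < n → 0 ≤ j → j < n →
        ((n:ℤ) - 1 - i + j ≤ k) → ext X i (j-1) = ext X (i+1) j := by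
      intro k
      induction k with
      | zero =>
        intro i j hi0 hin hj0 hjn hk
        have e := hstar i j hi0 hin hj0 hjn
        have z1 : ext X i (j-2) = 0 := ext_zero _ (by omega)
        have z2 : ext X (i+2) j = 0 := ext_zero _ (by omega)
        apply mul_left_cancel₀ h2μ
        linear_combination e - z1 + z2
      | succ k ih =>
        intro i j hi0 hin hj0 hjn hk
        have e := hstar i j hi0 hin hj0 hjn
        have z1 : ext X i (j-2) = ext X (i+1) (j-1) := by
          by_cases hj1 : 1 ≤ j
          · have := ih i (j-1) hi0 hin (by omega) (by omega) (by omega)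
            rw [show (j:ℤ)-1-1 = j-2 by ring] at this
            exact this
          · rw [ext_zero _ (by omega), ext_zero _ (by omega)]
        have z2 : ext X (i+1) (j-1) = ext X (i+2) j := by
          by_cases hi1 : i + 1 < n
          · have := ih (i+1) j (by omega) hi1 hj0 hjn (by omega)
            rw [show (i:ℤ)+1+1 = i+2 by ring] at this
            exact this
          · rw [ext_zero _ (by omega), ext_zero _ (by omega)]
        apply mul_left_cancel₀ h2μ
        linear_combination e - z1 - z2
    intro i j hi0 hin hj0 hjn
    exact key ((n - 1 - i + j).toNat) i j hi0 hin hj0 hjn (Int.self_le_toNat _)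
  -- Toeplitz transfer along diagonals
  have hT : ∀ k : ℕ, ∀ i j : ℤ, 0 ≤ i → i + k < n → 0 ≤ j → j + k < n →
      ext X i j = ext X (i+k) (j+k) := by
    intro k
    induction k with
    | zero => intro i j _ _ _ _; norm_num
    | succ k ih =>
      intro i j hi0 hik hj0 hjk
      have hc : ((k:ℤ)+1 : ℤ) = ((k+1 : ℕ) : ℤ) := by push_cast; ring
      have step : ext X i j = ext X (i+1) (j+1) := by
        have := hd i (j+1) hi0 (by omega) (by omega) (by omega)
        rw [show (j:ℤ)+1-1 = j by ring] at this
        exact this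
      rw [step]
      have := ih (i+1) (j+1) (by omega) (by omega) (by omega) (by omega)
      rw [show (i:ℤ)+1+k = i+(k+1:ℕ) by push_cast; ring,
        show (j:ℤ)+1+k = j+(k+1:ℕ) by push_cast; ring] at this
      exact this
  have hT2 : ∀ i j i' j' : ℤ, 0 ≤ i → i < n → 0 ≤ j → j < n →
      0 ≤ i' → i' < n → 0 ≤ j' → j' < n → j - i = j' - i' →
      ext X i j = ext X i' j' := by
    have main : ∀ i j i' j' : ℤ, 0 ≤ i → i < n → 0 ≤ j → j < n →
        0 ≤ i' → i' < n → 0 ≤ j' → j' < n → j - i = j' - i' → i ≤ i' →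
        ext X i j = ext X i' j' := by
      intro i j i' j' hi0 hin hj0 hjn hi0' hin' hj0' hjn' hdiag hle
      have := hT (i' - i).toNat i j hi0 (by omega) hj0 (by omega)
      rw [show i + ((i'-i).toNat : ℤ) = i' by omega, show j + ((i'-i).toNat : ℤ) = j' by omega] at this
      exact this
    intro i j i' j' hi0 hin hj0 hjn hi0' hin' hj0' hjn' hdiag
    rcases le_total i i' with h | h
    · exact main i j i' j' hi0 hin hj0 hjn hi0' hin' hj0' hjn' hdiag h
    · exact (main i' j' i j hi0' hin' hj0' hjn' hi0 hin hj0 hjn (by omega) h).symm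
  -- scalar version of h1
  have hdia : ∀ i j : ℤ, 0 ≤ i → i < n → 0 ≤ j → j < n →
      μ * ext X i ((n:ℤ)-1-j) + ext X i ((n:ℤ)-2-j)
        + (μ * ext X j ((n:ℤ)-1-i) + ext X j ((n:ℤ)-2-i)) = 0 := by
    intro i j hi0 hin hj0 hjn
    obtain ⟨i', hii⟩ : ∃ i' : Fin n, ((i' : ℕ) : ℤ) = i :=
      ⟨⟨i.toNat, by omega⟩, by simp only [Fin.val_mk]; omega⟩
    obtain ⟨j', hjj⟩ : ∃ j' : Fin n, ((j' : ℕ) : ℤ) = j :=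
      ⟨⟨j.toNat, by omega⟩, by simp only [Fin.val_mk]; omega⟩
    have e : (X * (Jmat μ n * Sb n) + Jmat μ n * Sb n * Xᵀ) i' j'
        = (0 : Matrix (Fin n) (Fin n) ℂ) i' j' := by rw [h1]
    rw [Matrix.add_apply, Matrix.zero_apply, ← Matrix.mul_assoc] at e
    rw [mul_S, Matrix.mul_assoc, J_mul] at e
    rw [hii, hjj] at e
    rw [mul_J_ext μ X (show (n:ℤ) - 1 - j < (n:ℤ) by omega)] at e
    rw [SXt_ext, SXt_ext] at e
    rw [show (n:ℤ)-1-j-1 = n-2-j by ring, show (n:ℤ)-1-(i+1) = n-2-i by ring] at e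
    linear_combination e
  -- the first row vanishes
  have hrow : ∀ d : ℕ, d < n → ext X 0 d = 0 := by
    intro d
    induction d with
    | zero =>
      intro _
      have e := hdia 0 ((n:ℤ)-1) (le_refl 0) (by omega) (by omega) (by omega)
      have t1 : ext X ((n:ℤ)-1) ((n:ℤ)-1) = ext X 0 0 := by
        apply hT2 <;> omega
      have t2 : ext X 0 ((n:ℤ)-2-((n:ℤ)-1)) = 0 := ext_zero _ (by omega)
      have t3 : ext X ((n:ℤ)-1) ((n:ℤ)-2) = 0 := by
        by_cases h2n : 2 ≤ n
        · have := hd ((n:ℤ)-1) ((n:ℤ)-1) (by omega) (by omega) (by omega) (by omega)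
          rw [show (n:ℤ)-1-1 = n-2 by ring] at this
          rw [this]
          exact ext_zero _ (by omega)
        · exact ext_zero _ (by omega)
      rw [show (n:ℤ)-1-((n:ℤ)-1) = 0 by ring] at e
      rw [show (n:ℤ)-1-(0:ℤ) = n-1 by ring, show (n:ℤ)-2-(0:ℤ) = n-2 by ring] at e
      rw [t1, t3] at e
      have : (2:ℂ) * μ * ext X 0 0 = 0 := by linear_combination e - t2
      exact (mul_eq_zero.mp this).elim (fun h => absurd h h2μ) id
    | succ d ih =>
      intro hdn
      have e := hdia 0 ((n:ℤ)-2-d) (le_refl 0) (by omega) (by omega) (by omega)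
      rw [show (n:ℤ)-1-((n:ℤ)-2-d) = d+1 by ring, show (n:ℤ)-2-((n:ℤ)-2-d) = d by ring,
        show (n:ℤ)-1-(0:ℤ) = n-1 by ring, show (n:ℤ)-2-(0:ℤ) = n-2 by ring] at e
      have t1 : ext X 0 (d:ℤ) = 0 := ih (by omega)
      have t2 : ext X ((n:ℤ)-2-d) ((n:ℤ)-1) = ext X 0 ((d:ℤ)+1) := by
        apply hT2 <;> omega
      have t3 : ext X ((n:ℤ)-2-d) ((n:ℤ)-2) = 0 := by
        rw [hT2 ((n:ℤ)-2-d) ((n:ℤ)-2) 0 (d:ℤ) (by omega) (by omega) (by omega) (by omega)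
          (by omega) (by omega) (by omega) (by omega) (by omega)]
        exact t1
      rw [t1, t2, t3] at e
      have : (2:ℂ) * μ * ext X 0 ((d:ℤ)+1) = 0 := by linear_combination e
      have := (mul_eq_zero.mp this).elim (fun h => absurd h h2μ) id
      rw [show ((d+1 : ℕ) : ℤ) = (d:ℤ)+1 by push_cast; ring]
      exact this
  -- conclude
  ext i j
  rw [← ext_coe X i j]
  have hi := i.2; have hj := j.2
  by_cases hij : (i:ℕ) ≤ (j:ℕ)
  · rw [hT2 ((i:ℕ):ℤ) ((j:ℕ):ℤ) 0 (((j:ℕ):ℤ) - ((i:ℕ):ℤ)) (by omega) (by omega) (by omega)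
      (by omega) (by omega) (by omega) (by omega) (by omega) (by omega)]
    have := hrow ((j:ℕ) - (i:ℕ)) (by omega)
    rw [show (((j:ℕ) - (i:ℕ) : ℕ) : ℤ) = ((j:ℕ):ℤ) - ((i:ℕ):ℤ) by omega] at this
    rw [this, Matrix.zero_apply]
  · rw [hT2 ((i:ℕ):ℤ) ((j:ℕ):ℤ) ((n:ℤ)-1) ((n:ℤ)-1-(((i:ℕ):ℤ) - ((j:ℕ):ℤ))) (by omega)
      (by omega) (by omega) (by omega) (by omega) (by omega) (by omega) (by omega) (by omega)]
    have e := hd ((n:ℤ)-1) ((n:ℤ)-((i:ℕ):ℤ)+((j:ℕ):ℤ)) (by omega) (by omega) (by omega) (by omega)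
    rw [show (n:ℤ)-((i:ℕ):ℤ)+((j:ℕ):ℤ)-1 = (n:ℤ)-1-(((i:ℕ):ℤ) - ((j:ℕ):ℤ)) by ring] at e
    rw [e, ext_zero _ (by omega), Matrix.zero_apply]

end S7
namespace S7
variable {n : ℕ}

def Mcx (ν : ℂ) (m n : ℕ) : Matrix (Fin n) (Fin n) ℂ :=
  Matrix.of fun i j =>
    if (i : ℕ) < m ∧ m ≤ (j : ℕ) then
      (if (j : ℕ) - m = (i : ℕ) then ν else if (j : ℕ) - m = (i : ℕ) + 1 then 1 else 0)
    else if m ≤ (i : ℕ) ∧ (i : ℕ) - m = (j : ℕ) then 1 else 0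

def Cdx (ν ν' : ℂ) (m n : ℕ) : Matrix (Fin n) (Fin n) ℂ :=
  Matrix.of fun i j =>
    if (j : ℕ) = (i : ℕ) then (if (i : ℕ) < m then ν else ν')
    else if (j : ℕ) = (i : ℕ) + 1 ∧ (i : ℕ) + 1 ≠ m then 1 else 0

def MSx (ν : ℂ) (m n : ℕ) : Matrix (Fin n) (Fin n) ℂ :=
  Matrix.of fun i j =>
    if (i : ℕ) < m then
      (if (i : ℕ) + (j : ℕ) + 1 = m then ν else if (i : ℕ) + (j : ℕ) + 2 = m then 1 else 0)
    else if (i : ℕ) + (j : ℕ) + 1 = 3 * m then 1 else 0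

def cf (ν ν' : ℂ) (m : ℕ) (r : ℤ) : ℂ := if r < (m : ℤ) then ν else ν'
def tf (m : ℕ) (r : ℤ) : ℂ := if r = (m : ℤ) - 1 then 0 else 1

lemma M_mul_S (ν : ℂ) (m : ℕ) (hm : 0 < m) (hn : n = 2 * m) :
    Mcx ν m n * Sb n = MSx ν m n := by
  ext i j
  rw [Matrix.mul_apply]
  have hi := i.2; have hj := j.2
  have step : ∀ k : Fin n, Mcx ν m n i k * Sb n k j
      = if (k : ℕ) = n - 1 - (j : ℕ) then Mcx ν m n i k else 0 := by
    intro k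
    have hk := k.2
    simp only [Sb, Matrix.of_apply]
    split_ifs <;> first | ring1 | (exfalso; omega)
  rw [Finset.sum_congr rfl (fun k _ => step k), sum_if_eq,
    dif_pos (by omega : n - 1 - (j : ℕ) < n)]
  simp only [Mcx, MSx, Matrix.of_apply, Fin.val_mk]
  split_ifs <;> first | rfl | (exfalso; omega)

lemma M_mul_M (ν ν' : ℂ) (m : ℕ) (hm : 0 < m) (hn : n = 2 * m) :
    Mcx ν m n * Mcx ν' m n = Cdx ν ν' m n := by
  ext i j
  rw [Matrix.mul_apply]
  have hi := i.2; have hj := j.2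
  by_cases him : (i : ℕ) < m
  · have step : ∀ k : Fin n, Mcx ν m n i k * Mcx ν' m n k j
        = (if (k : ℕ) = (i : ℕ) + m then ν * Mcx ν' m n k j else 0)
          + (if (k : ℕ) = (i : ℕ) + m + 1 then Mcx ν' m n k j else 0) := by
      intro k
      have hk := k.2
      simp only [Mcx, Matrix.of_apply]
      split_ifs <;> first | ring1 | (exfalso; omega)
    rw [Finset.sum_congr rfl (fun k _ => step k), Finset.sum_add_distrib,
      sum_if_eq (fun k => ν * Mcx ν' m n k j), sum_if_eq (fun k => Mcx ν' m n k j),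
      dif_pos (by omega : (i : ℕ) + m < n)]
    by_cases hil : (i : ℕ) + m + 1 < n
    · rw [dif_pos hil]
      simp only [Mcx, Cdx, Matrix.of_apply, Fin.val_mk]
      split_ifs <;> first | ring1 | (exfalso; omega)
    · rw [dif_neg hil]
      simp only [Mcx, Cdx, Matrix.of_apply, Fin.val_mk]
      split_ifs <;> first | ring1 | (exfalso; omega)
  · have step : ∀ k : Fin n, Mcx ν m n i k * Mcx ν' m n k j
        = if (k : ℕ) = (i : ℕ) - m then Mcx ν' m n k j else 0 := by
      intro k
      have hk := k.2
      simp only [Mcx, Matrix.of_apply]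
      split_ifs <;> first | ring1 | (exfalso; omega)
    rw [Finset.sum_congr rfl (fun k _ => step k),
      sum_if_eq (fun k => Mcx ν' m n k j), dif_pos (by omega : (i : ℕ) - m < n)]
    simp only [Mcx, Cdx, Matrix.of_apply, Fin.val_mk]
    split_ifs <;> first | ring1 | (exfalso; omega)

lemma mul_Cd (ν ν' : ℂ) (m : ℕ) (A : Matrix (Fin n) (Fin n) ℂ) (i j : Fin n) :
    (A * Cdx ν ν' m n) i j
      = cf ν ν' m ((j : ℕ) : ℤ) * ext A i j
        + tf m (((j : ℕ) : ℤ) - 1) * ext A i (((j : ℕ) : ℤ) - 1) := by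
  rw [Matrix.mul_apply]
  have hj := j.2
  have step : ∀ k : Fin n, A i k * Cdx ν ν' m n k j
      = (if (k : ℕ) = (j : ℕ) then cf ν ν' m ((j : ℕ) : ℤ) * A i k else 0)
        + (if (k : ℕ) + 1 = (j : ℕ) ∧ (j : ℕ) ≠ m then A i k else 0) := by
    intro k
    have hk := k.2
    simp only [Cdx, Matrix.of_apply, cf]
    split_ifs <;> first | ring1 | (exfalso; omega)
  rw [Finset.sum_congr rfl (fun k _ => step k), Finset.sum_add_distrib,
    sum_if_eq (fun k => cf ν ν' m ((j : ℕ) : ℤ) * A i k), dif_pos j.2]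
  congr 1
  · rw [ext_coe]
  · by_cases hjc : 1 ≤ (j : ℕ) ∧ (j : ℕ) ≠ m
    · have step2 : ∀ k : Fin n, (if (k : ℕ) + 1 = (j : ℕ) ∧ (j : ℕ) ≠ m then A i k else 0)
          = (if (k : ℕ) = (j : ℕ) - 1 then A i k else 0) := by
        intro k; split_ifs <;> first | rfl | (exfalso; omega)
      rw [Finset.sum_congr rfl (fun k _ => step2 k), sum_if_eq,
        dif_pos (by omega : (j : ℕ) - 1 < n)]
      rw [show ((j : ℕ) : ℤ) - 1 = (((j : ℕ) - 1 : ℕ) : ℤ) by omega, ext_eq_dite', dif_pos]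
      rw [show tf m ((((j : ℕ) - 1 : ℕ)) : ℤ) = 1 from if_neg (by omega), one_mul]
    · have hsum : (∑ k : Fin n,
          if (k : ℕ) + 1 = (j : ℕ) ∧ (j : ℕ) ≠ m then A i k else 0) = 0 :=
        Finset.sum_eq_zero fun k _ => if_neg (by omega)
      rw [hsum]
      rcases (by omega : (j : ℕ) = 0 ∨ (j : ℕ) = m) with hj0 | hjm2
      · rw [ext_zero A (by omega), mul_zero]
      · rw [show tf m (((j : ℕ) : ℤ) - 1) = 0 from if_pos (by omega), zero_mul]

lemma Cd_mul (ν ν' : ℂ) (m : ℕ) (A : Matrix (Fin n) (Fin n) ℂ) (i j : Fin n) :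
    (Cdx ν ν' m n * A) i j
      = cf ν ν' m ((i : ℕ) : ℤ) * ext A i j
        + tf m ((i : ℕ) : ℤ) * ext A (((i : ℕ) : ℤ) + 1) j := by
  rw [Matrix.mul_apply]
  have hi := i.2
  have step : ∀ k : Fin n, Cdx ν ν' m n i k * A k j
      = (if (k : ℕ) = (i : ℕ) then cf ν ν' m ((i : ℕ) : ℤ) * A k j else 0)
        + (if (k : ℕ) = (i : ℕ) + 1 ∧ (i : ℕ) + 1 ≠ m then A k j else 0) := by
    intro k
    have hk := k.2
    simp only [Cdx, Matrix.of_apply, cf]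
    split_ifs <;> first | ring1 | (exfalso; omega)
  rw [Finset.sum_congr rfl (fun k _ => step k), Finset.sum_add_distrib,
    sum_if_eq (fun k => cf ν ν' m ((i : ℕ) : ℤ) * A k j), dif_pos i.2]
  congr 1
  · rw [ext_coe]
  · by_cases hic : (i : ℕ) + 1 ≠ m
    · have step2 : ∀ k : Fin n, (if (k : ℕ) = (i : ℕ) + 1 ∧ (i : ℕ) + 1 ≠ m then A k j else 0)
          = (if (k : ℕ) = (i : ℕ) + 1 then A k j else 0) := by
        intro k; split_ifs <;> first | rfl | (exfalso; omega)
      rw [Finset.sum_congr rfl (fun k _ => step2 k), sum_if_eq (fun k => A k j)]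
      rw [show ((i : ℕ) : ℤ) + 1 = (((i : ℕ) + 1 : ℕ) : ℤ) by omega, ext_eq_dite]
      rw [show tf m ((i : ℕ) : ℤ) = 1 from if_neg (by omega), one_mul]
    · push_neg at hic
      have hsum : (∑ k : Fin n,
          if (k : ℕ) = (i : ℕ) + 1 ∧ (i : ℕ) + 1 ≠ m then A k j else 0) = 0 :=
        Finset.sum_eq_zero fun k _ => if_neg (by omega)
      rw [hsum, show tf m ((i : ℕ) : ℤ) = 0 from if_pos (by omega), zero_mul]

lemma mul_MS (ν : ℂ) (m : ℕ) (hm : 0 < m) (hn : n = 2 * m)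
    (A : Matrix (Fin n) (Fin n) ℂ) (i j : Fin n) :
    (A * MSx ν m n) i j
      = if ((j : ℕ) : ℤ) < (m : ℤ) then
          ν * ext A i ((m : ℤ) - 1 - (j : ℕ)) + ext A i ((m : ℤ) - 2 - (j : ℕ))
        else ext A i (3 * (m : ℤ) - 1 - (j : ℕ)) := by
  rw [Matrix.mul_apply]
  have hj := j.2
  by_cases hjm : (j : ℕ) < m
  · rw [if_pos (show ((j : ℕ) : ℤ) < (m : ℤ) by omega)]
    have step : ∀ k : Fin n, A i k * MSx ν m n k j
        = (if (k : ℕ) = m - 1 - (j : ℕ) then ν * A i k else 0)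
          + (if (k : ℕ) + (j : ℕ) + 2 = m then A i k else 0) := by
      intro k
      have hk := k.2
      simp only [MSx, Matrix.of_apply]
      split_ifs <;> first | ring1 | (exfalso; omega)
    rw [Finset.sum_congr rfl (fun k _ => step k), Finset.sum_add_distrib,
      sum_if_eq (fun k => ν * A i k), dif_pos (by omega : m - 1 - (j : ℕ) < n)]
    congr 1
    · rw [show (m : ℤ) - 1 - (j : ℕ) = ((m - 1 - (j : ℕ) : ℕ) : ℤ) by omega,
        ext_eq_dite', dif_pos]
    · by_cases hj2 : (j : ℕ) + 2 ≤ m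
      · have step2 : ∀ k : Fin n, (if (k : ℕ) + (j : ℕ) + 2 = m then A i k else 0)
            = (if (k : ℕ) = m - 2 - (j : ℕ) then A i k else 0) := by
          intro k; split_ifs <;> first | rfl | (exfalso; omega)
        rw [Finset.sum_congr rfl (fun k _ => step2 k), sum_if_eq,
          dif_pos (by omega : m - 2 - (j : ℕ) < n)]
        rw [show (m : ℤ) - 2 - (j : ℕ) = ((m - 2 - (j : ℕ) : ℕ) : ℤ) by omega,
          ext_eq_dite', dif_pos]
      · rw [ext_zero A (by omega)]
        exact Finset.sum_eq_zero fun k _ => if_neg (by omega)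
  · rw [if_neg (show ¬(((j : ℕ) : ℤ) < (m : ℤ)) by omega)]
    have step : ∀ k : Fin n, A i k * MSx ν m n k j
        = if (k : ℕ) = 3 * m - 1 - (j : ℕ) then A i k else 0 := by
      intro k
      have hk := k.2
      simp only [MSx, Matrix.of_apply]
      split_ifs <;> first | ring1 | (exfalso; omega)
    rw [Finset.sum_congr rfl (fun k _ => step k), sum_if_eq,
      dif_pos (by omega : 3 * m - 1 - (j : ℕ) < n)]
    rw [show 3 * (m : ℤ) - 1 - (j : ℕ) = ((3 * m - 1 - (j : ℕ) : ℕ) : ℤ) by omega,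
      ext_eq_dite', dif_pos]

lemma MS_mul (ν : ℂ) (m : ℕ) (hm : 0 < m) (hn : n = 2 * m)
    (B : Matrix (Fin n) (Fin n) ℂ) (i j : Fin n) :
    (MSx ν m n * B) i j
      = if ((i : ℕ) : ℤ) < (m : ℤ) then
          ν * ext B ((m : ℤ) - 1 - (i : ℕ)) j + ext B ((m : ℤ) - 2 - (i : ℕ)) j
        else ext B (3 * (m : ℤ) - 1 - (i : ℕ)) j := by
  rw [Matrix.mul_apply]
  have hi := i.2
  by_cases him : (i : ℕ) < m
  · rw [if_pos (show ((i : ℕ) : ℤ) < (m : ℤ) by omega)]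
    have step : ∀ k : Fin n, MSx ν m n i k * B k j
        = (if (k : ℕ) = m - 1 - (i : ℕ) then ν * B k j else 0)
          + (if (k : ℕ) + (i : ℕ) + 2 = m then B k j else 0) := by
      intro k
      have hk := k.2
      simp only [MSx, Matrix.of_apply]
      split_ifs <;> first | ring1 | (exfalso; omega)
    rw [Finset.sum_congr rfl (fun k _ => step k), Finset.sum_add_distrib,
      sum_if_eq (fun k => ν * B k j), dif_pos (by omega : m - 1 - (i : ℕ) < n)]
    congr 1
    · rw [show (m : ℤ) - 1 - (i : ℕ) = ((m - 1 - (i : ℕ) : ℕ) : ℤ) by omega,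
        ext_eq_dite, dif_pos]
    · by_cases hi2 : (i : ℕ) + 2 ≤ m
      · have step2 : ∀ k : Fin n, (if (k : ℕ) + (i : ℕ) + 2 = m then B k j else 0)
            = (if (k : ℕ) = m - 2 - (i : ℕ) then B k j else 0) := by
          intro k; split_ifs <;> first | rfl | (exfalso; omega)
        rw [Finset.sum_congr rfl (fun k _ => step2 k), sum_if_eq (fun k => B k j),
          dif_pos (by omega : m - 2 - (i : ℕ) < n)]
        rw [show (m : ℤ) - 2 - (i : ℕ) = ((m - 2 - (i : ℕ) : ℕ) : ℤ) by omega,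
          ext_eq_dite, dif_pos]
      · rw [ext_zero B (by omega)]
        exact Finset.sum_eq_zero fun k _ => if_neg (by omega)
  · rw [if_neg (show ¬(((i : ℕ) : ℤ) < (m : ℤ)) by omega)]
    have step : ∀ k : Fin n, MSx ν m n i k * B k j
        = if (k : ℕ) = 3 * m - 1 - (i : ℕ) then B k j else 0 := by
      intro k
      have hk := k.2
      simp only [MSx, Matrix.of_apply]
      split_ifs <;> first | ring1 | (exfalso; omega)
    rw [Finset.sum_congr rfl (fun k _ => step k), sum_if_eq (fun k => B k j),
      dif_pos (by omega : 3 * m - 1 - (i : ℕ) < n)]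
    rw [show 3 * (m : ℤ) - 1 - (i : ℕ) = ((3 * m - 1 - (i : ℕ) : ℕ) : ℤ) by omega,
      ext_eq_dite, dif_pos]

lemma commute_MM (M M' X : Matrix (Fin n) (Fin n) ℂ)
    (h1 : X * (M * Sb n) + M * Sb n * Xᵀ = 0)
    (h2 : Xᵀ * (Sb n * M') + Sb n * M' * X = 0) :
    X * (M * M') = M * (M' * X) := by
  have hSS : Sb n * Sb n = (1 : Matrix (Fin n) (Fin n) ℂ) := S_mul_S
  have a1 : X * (M * Sb n) * (Sb n * M') + M * Sb n * Xᵀ * (Sb n * M') = 0 := by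
    rw [← add_mul, h1, zero_mul]
  have a2 : M * Sb n * (Xᵀ * (Sb n * M')) + M * Sb n * (Sb n * M' * X) = 0 := by
    rw [← mul_add, h2, mul_zero]
  have hSS' : ∀ A : Matrix (Fin n) (Fin n) ℂ, Sb n * (Sb n * A) = A := by
    intro A; rw [← Matrix.mul_assoc, hSS, Matrix.one_mul]
  simp only [Matrix.mul_assoc] at a1 a2
  rw [hSS'] at a1 a2
  exact add_right_cancel ((a1.trans a2.symm).trans (add_comm _ _))

lemma shiftT2f (f : ℤ → ℤ → ℂ) (a b : ℤ)
    (hrel : ∀ i j, a ≤ i → i < b → a ≤ j → j < b → f i (j - 1) = f (i + 1) j) :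
    ∀ i j i' j' : ℤ, a ≤ i → i < b → a ≤ j → j < b → a ≤ i' → i' < b → a ≤ j' → j' < b →
      j - i = j' - i' → f i j = f i' j' := by
  have key : ∀ k : ℕ, ∀ i j, a ≤ i → (i + k) < b → a ≤ j → (j + k) < b →
      f i j = f (i + k) (j + k) := by
    intro k
    induction k with
    | zero => intro i j _ _ _ _; norm_num
    | succ k ih =>
      intro i j hi hik hj hjk
      have step : f i j = f (i + 1) (j + 1) := by
        have := hrel i (j + 1) hi (by omega) (by omega) (by omega)
        rw [show j + 1 - 1 = j by ring] at this
        exact this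
      rw [step]
      have := ih (i + 1) (j + 1) (by omega) (by omega) (by omega) (by omega)
      rw [show i + 1 + (k : ℤ) = i + ((k + 1 : ℕ) : ℤ) by push_cast; ring,
        show j + 1 + (k : ℤ) = j + ((k + 1 : ℕ) : ℤ) by push_cast; ring] at this
      exact this
  intro i j i' j' hi hib hj hjb hi' hib' hj' hjb' hdiag
  rcases le_total i i' with h | h
  · have := key (i' - i).toNat i j hi (by omega) hj (by omega)
    rw [show i + ((i' - i).toNat : ℤ) = i' by omega,
      show j + ((i' - i).toNat : ℤ) = j' by omega] at this
    exact this
  · have := key (i - i').toNat i' j' hi' (by omega) hj' (by omega)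
    rw [show i' + ((i - i').toNat : ℤ) = i by omega,
      show j' + ((i - i').toNat : ℤ) = j by omega] at this
    exact this.symm

end S7
namespace S7
variable {n : ℕ}

lemma complex_case (m : ℕ) (hm : 0 < m) (hn : n = 2 * m) (μ : ℂ)
    (hμ0 : μ ≠ 0) (hμi : μ.im ≠ 0) (X : Matrix (Fin n) (Fin n) ℂ)
    (h1 : X * (Mcx μ m n * Sb n) + Mcx μ m n * Sb n * Xᵀ = 0)
    (h2 : Xᵀ * (Sb n * Mcx (starRingEnd ℂ μ) m n)
      + Sb n * Mcx (starRingEnd ℂ μ) m n * X = 0) : X = 0 := by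
  set ν' : ℂ := starRingEnd ℂ μ with hν'
  have hsub1 : ν' - μ ≠ 0 := by
    rw [hν']
    exact sub_ne_zero.mpr (fun h => hμi (Complex.conj_eq_iff_im.mp h))
  have hsub2 : μ - ν' ≠ 0 := by
    rw [hν']
    exact sub_ne_zero.mpr (fun h => hμi (Complex.conj_eq_iff_im.mp h.symm))
  -- X commutes with the block diagonal matrix
  have hC : X * Cdx μ ν' m n = Cdx μ ν' m n * X := by
    have h3 := commute_MM (Mcx μ m n) (Mcx ν' m n) X h1 h2
    rw [← Matrix.mul_assoc (Mcx μ m n) (Mcx ν' m n) X] at h3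
    rw [M_mul_M μ ν' m hm hn] at h3
    exact h3
  -- scalar commuting relation
  have hstar : ∀ i j : ℤ, 0 ≤ i → i < n → 0 ≤ j → j < n →
      cf μ ν' m j * ext X i j + tf m (j - 1) * ext X i (j - 1)
        = cf μ ν' m i * ext X i j + tf m i * ext X (i + 1) j := by
    intro i j hi0 hin hj0 hjn
    obtain ⟨i', hii⟩ : ∃ i' : Fin n, ((i' : ℕ) : ℤ) = i :=
      ⟨⟨i.toNat, by omega⟩, by simp only [Fin.val_mk]; omega⟩
    obtain ⟨j', hjj⟩ : ∃ j' : Fin n, ((j' : ℕ) : ℤ) = j :=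
      ⟨⟨j.toNat, by omega⟩, by simp only [Fin.val_mk]; omega⟩
    have e : (X * Cdx μ ν' m n) i' j' = (Cdx μ ν' m n * X) i' j' := by rw [hC]
    rw [mul_Cd, Cd_mul] at e
    rw [hii, hjj] at e
    exact e
  -- off-diagonal blocks vanish
  have hoff : ∀ i j : ℤ, 0 ≤ i → i < n → 0 ≤ j → j < n →
      ((i < (m:ℤ) ∧ (m:ℤ) ≤ j) ∨ ((m:ℤ) ≤ i ∧ j < (m:ℤ))) → ext X i j = 0 := by
    have key : ∀ k : ℕ, ∀ i j : ℤ, 0 ≤ i → i < n → 0 ≤ j → j < n →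
        ((i < (m:ℤ) ∧ (m:ℤ) ≤ j) ∨ ((m:ℤ) ≤ i ∧ j < (m:ℤ))) →
        ((n:ℤ) - 1 - i + j ≤ k) → ext X i j = 0 := by
      intro k
      induction k with
      | zero =>
        intro i j hi0 hin hj0 hjn hcr hk
        have e := hstar i j hi0 hin hj0 hjn
        rcases hcr with ⟨ha, hb⟩ | ⟨ha, hb⟩
        · omega
        · rw [show cf μ ν' m j = μ from if_pos (by omega),
            show cf μ ν' m i = ν' from if_neg (by omega),
            show tf m i = 1 from if_neg (by omega),
            show tf m (j-1) = 1 from if_neg (by omega),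
            ext_zero X (show (i:ℤ)+1 < 0 ∨ (n:ℤ) ≤ i+1 ∨ (j:ℤ) < 0 ∨ (n:ℤ) ≤ j by omega),
            ext_zero X (show (i:ℤ) < 0 ∨ (n:ℤ) ≤ i ∨ j-1 < 0 ∨ (n:ℤ) ≤ j-1 by omega)] at e
          have h0 : (μ - ν') * ext X i j = 0 := by linear_combination e
          exact (mul_eq_zero.mp h0).resolve_left hsub2
      | succ k ih =>
        intro i j hi0 hin hj0 hjn hcr hk
        have e := hstar i j hi0 hin hj0 hjn
        rcases hcr with ⟨ha, hb⟩ | ⟨ha, hb⟩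
        · have z1 : tf m i * ext X (i+1) j = 0 := by
            by_cases hi1 : i = (m:ℤ) - 1
            · rw [show tf m i = 0 from if_pos hi1, zero_mul]
            · rw [show tf m i = 1 from if_neg hi1, one_mul]
              exact ih (i+1) j (by omega) (by omega) hj0 hjn
                (Or.inl ⟨by omega, hb⟩) (by omega)
          have z2 : tf m (j-1) * ext X i (j-1) = 0 := by
            by_cases hj1 : j - 1 = (m:ℤ) - 1
            · rw [show tf m (j-1) = 0 from if_pos hj1, zero_mul]
            · rw [show tf m (j-1) = 1 from if_neg hj1, one_mul]
              exact ih i (j-1) hi0 hin (by omega) (by omega)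
                (Or.inl ⟨ha, by omega⟩) (by omega)
          rw [show cf μ ν' m j = ν' from if_neg (by omega),
            show cf μ ν' m i = μ from if_pos ha] at e
          have h0 : (ν' - μ) * ext X i j = 0 := by linear_combination e - z2 + z1
          exact (mul_eq_zero.mp h0).resolve_left hsub1
        · have z1 : tf m i * ext X (i+1) j = 0 := by
            rw [show tf m i = 1 from if_neg (by omega), one_mul]
            by_cases hi1 : i + 1 < n
            · exact ih (i+1) j (by omega) hi1 hj0 hjn (Or.inr ⟨by omega, hb⟩) (by omega)
            · exact ext_zero X (by omega)
          have z2 : tf m (j-1) * ext X i (j-1) = 0 := by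
            rw [show tf m (j-1) = 1 from if_neg (by omega), one_mul]
            by_cases hj1 : 0 ≤ j - 1
            · exact ih i (j-1) hi0 hin hj1 (by omega) (Or.inr ⟨ha, by omega⟩) (by omega)
            · exact ext_zero X (by omega)
          rw [show cf μ ν' m j = μ from if_pos hb,
            show cf μ ν' m i = ν' from if_neg (by omega)] at e
          have h0 : (μ - ν') * ext X i j = 0 := by linear_combination e - z2 + z1
          exact (mul_eq_zero.mp h0).resolve_left hsub2
    intro i j a b c d e
    exact key ((n:ℤ) - 1 - i + j).toNat i j a b c d e (Int.self_le_toNat _)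
  -- in-block shift relations
  have hdA : ∀ i j : ℤ, 0 ≤ i → i < (m:ℤ) → 0 ≤ j → j < (m:ℤ) →
      ext X i (j-1) = ext X (i+1) j := by
    intro i j hi0 him hj0 hjm
    have e := hstar i j hi0 (by omega) hj0 (by omega)
    rw [show cf μ ν' m j = μ from if_pos (by omega),
      show cf μ ν' m i = μ from if_pos (by omega),
      show tf m (j-1) = 1 from if_neg (by omega), one_mul] at e
    by_cases hi1 : i = (m:ℤ) - 1
    · rw [show tf m i = 0 from if_pos hi1] at e
      have hz : ext X (i+1) j = 0 :=
        hoff (i+1) j (by omega) (by omega) hj0 (by omega) (Or.inr ⟨by omega, by omega⟩)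
      rw [hz]
      linear_combination e
    · rw [show tf m i = 1 from if_neg hi1, one_mul] at e
      linear_combination e
  have hdD : ∀ i j : ℤ, (m:ℤ) ≤ i → i < n → (m:ℤ) ≤ j → j < n →
      ext X i (j-1) = ext X (i+1) j := by
    intro i j him hin hjm hjn
    have e := hstar i j (by omega) hin (by omega) hjn
    rw [show cf μ ν' m j = ν' from if_neg (by omega),
      show cf μ ν' m i = ν' from if_neg (by omega),
      show tf m i = 1 from if_neg (by omega), one_mul] at e
    by_cases hj1 : j = (m:ℤ)
    · rw [show tf m (j-1) = 0 from if_pos (by omega)] at e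
      have hz : ext X i (j-1) = 0 :=
        hoff i (j-1) (by omega) hin (by omega) (by omega) (Or.inr ⟨him, by omega⟩)
      rw [hz]
      linear_combination e
    · rw [show tf m (j-1) = 1 from if_neg (by omega), one_mul] at e
      linear_combination e
  have hsA := shiftT2f (ext X) 0 (m:ℤ) (fun i j a b c d => hdA i j a b c d)
  have hsD := shiftT2f (ext X) (m:ℤ) (n:ℤ) (fun i j a b c d => hdD i j a b c d)
  -- scalar version of h1
  have hdia : ∀ i j : ℤ, 0 ≤ i → i < n → 0 ≤ j → j < n →
      (if j < (m:ℤ) then μ * ext X i ((m:ℤ)-1-j) + ext X i ((m:ℤ)-2-j)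
        else ext X i (3*(m:ℤ)-1-j))
      + (if i < (m:ℤ) then μ * ext X j ((m:ℤ)-1-i) + ext X j ((m:ℤ)-2-i)
        else ext X j (3*(m:ℤ)-1-i)) = 0 := by
    have h1' : X * MSx μ m n + MSx μ m n * Xᵀ = 0 := by
      rw [← M_mul_S μ m hm hn]
      exact h1
    intro i j hi0 hin hj0 hjn
    obtain ⟨i', hii⟩ : ∃ i' : Fin n, ((i' : ℕ) : ℤ) = i :=
      ⟨⟨i.toNat, by omega⟩, by simp only [Fin.val_mk]; omega⟩
    obtain ⟨j', hjj⟩ : ∃ j' : Fin n, ((j' : ℕ) : ℤ) = j :=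
      ⟨⟨j.toNat, by omega⟩, by simp only [Fin.val_mk]; omega⟩
    have e : (X * MSx μ m n + MSx μ m n * Xᵀ) i' j'
        = (0 : Matrix (Fin n) (Fin n) ℂ) i' j' := by rw [h1']
    rw [Matrix.add_apply, Matrix.zero_apply, mul_MS μ m hm hn, MS_mul μ m hm hn] at e
    simp only [ext_transpose] at e
    rw [hii, hjj] at e
    exact e
  -- first row of the upper-left block vanishes
  have hA0 : ∀ d : ℕ, (d:ℤ) < (m:ℤ) → ext X 0 (d:ℤ) = 0 := by
    intro d
    induction d with
    | zero =>
      intro _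
      have e := hdia 0 ((m:ℤ)-1) (by omega) (by omega) (by omega) (by omega)
      rw [if_pos (by omega), if_pos (by omega)] at e
      rw [show (m:ℤ)-1-((m:ℤ)-1) = 0 by ring, show (m:ℤ)-2-((m:ℤ)-1) = -1 by ring,
        show (m:ℤ)-1-(0:ℤ) = (m:ℤ)-1 by ring, show (m:ℤ)-2-(0:ℤ) = (m:ℤ)-2 by ring] at e
      have t1 : ext X ((m:ℤ)-1) ((m:ℤ)-1) = ext X 0 0 := by
        apply hsA <;> omega
      have t2 : ext X 0 (-1 : ℤ) = 0 := ext_zero X (by omega)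
      have t3 : ext X ((m:ℤ)-1) ((m:ℤ)-2) = 0 := by
        by_cases h2m : 2 ≤ m
        · have hh := hdA ((m:ℤ)-1) ((m:ℤ)-1) (by omega) (by omega) (by omega) (by omega)
          rw [show (m:ℤ)-1-1 = (m:ℤ)-2 by ring] at hh
          rw [hh]
          exact hoff ((m:ℤ)-1+1) ((m:ℤ)-1) (by omega) (by omega) (by omega) (by omega)
            (Or.inr ⟨by omega, by omega⟩)
        · exact ext_zero X (by omega)
      rw [t1, t2, t3] at e
      have h0 : (2*μ) * ext X 0 0 = 0 := by linear_combination e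
      have := (mul_eq_zero.mp h0).resolve_left (mul_ne_zero two_ne_zero hμ0)
      simpa using this
    | succ d ih =>
      intro hdm
      have e := hdia 0 ((m:ℤ)-2-d) (by omega) (by omega) (by omega) (by omega)
      rw [if_pos (by omega), if_pos (by omega)] at e
      rw [show (m:ℤ)-1-((m:ℤ)-2-d) = (d:ℤ)+1 by ring,
        show (m:ℤ)-2-((m:ℤ)-2-d) = (d:ℤ) by ring,
        show (m:ℤ)-1-(0:ℤ) = (m:ℤ)-1 by ring, show (m:ℤ)-2-(0:ℤ) = (m:ℤ)-2 by ring] at e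
      have t1 : ext X 0 (d:ℤ) = 0 := ih (by omega)
      have t2 : ext X ((m:ℤ)-2-d) ((m:ℤ)-1) = ext X 0 ((d:ℤ)+1) := by
        apply hsA <;> omega
      have t3 : ext X ((m:ℤ)-2-d) ((m:ℤ)-2) = 0 := by
        rw [hsA ((m:ℤ)-2-d) ((m:ℤ)-2) 0 (d:ℤ) (by omega) (by omega) (by omega) (by omega)
          (by omega) (by omega) (by omega) (by omega) (by omega)]
        exact t1
      rw [t1, t2, t3] at e
      have h0 : (2*μ) * ext X 0 ((d:ℤ)+1) = 0 := by linear_combination e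
      have hz := (mul_eq_zero.mp h0).resolve_left (mul_ne_zero two_ne_zero hμ0)
      rw [show ((d+1 : ℕ) : ℤ) = (d:ℤ)+1 by push_cast; ring]
      exact hz
  -- conclude
  ext i j
  rw [← ext_coe X i j, Matrix.zero_apply]
  have hi := i.2; have hj := j.2
  by_cases ham : ((i:ℕ):ℤ) < (m:ℤ) <;> by_cases hbm : ((j:ℕ):ℤ) < (m:ℤ)
  · -- upper-left block
    by_cases hab : ((i:ℕ):ℤ) ≤ ((j:ℕ):ℤ)
    · rw [hsA ((i:ℕ):ℤ) ((j:ℕ):ℤ) 0 (((j:ℕ):ℤ) - ((i:ℕ):ℤ)) (by omega) (by omega)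
        (by omega) (by omega) (by omega) (by omega) (by omega) (by omega) (by omega)]
      have := hA0 ((j:ℕ) - (i:ℕ)) (by omega)
      rw [show (((j:ℕ) - (i:ℕ) : ℕ) : ℤ) = ((j:ℕ):ℤ) - ((i:ℕ):ℤ) by omega] at this
      exact this
    · rw [hsA ((i:ℕ):ℤ) ((j:ℕ):ℤ) ((m:ℤ)-1) ((m:ℤ)-1-(((i:ℕ):ℤ) - ((j:ℕ):ℤ))) (by omega)
        (by omega) (by omega) (by omega) (by omega) (by omega) (by omega) (by omega)
        (by omega)]
      have e := hdA ((m:ℤ)-1) ((m:ℤ)-(((i:ℕ):ℤ) - ((j:ℕ):ℤ))) (by omega) (by omega)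
        (by omega) (by omega)
      rw [show (m:ℤ)-(((i:ℕ):ℤ) - ((j:ℕ):ℤ))-1 = (m:ℤ)-1-(((i:ℕ):ℤ) - ((j:ℕ):ℤ)) by ring] at e
      rw [e]
      exact hoff ((m:ℤ)-1+1) ((m:ℤ)-(((i:ℕ):ℤ) - ((j:ℕ):ℤ))) (by omega) (by omega)
        (by omega) (by omega) (Or.inr ⟨by omega, by omega⟩)
  · exact hoff _ _ (by omega) (by omega) (by omega) (by omega) (Or.inl ⟨ham, by omega⟩)
  · exact hoff _ _ (by omega) (by omega) (by omega) (by omega) (Or.inr ⟨by omega, hbm⟩)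
  · -- lower-right block
    have e := hdia ((i:ℕ):ℤ) (3*(m:ℤ)-1-((j:ℕ):ℤ)) (by omega) (by omega) (by omega) (by omega)
    rw [if_neg (by omega), if_neg (by omega)] at e
    rw [show 3*(m:ℤ)-1-(3*(m:ℤ)-1-((j:ℕ):ℤ)) = ((j:ℕ):ℤ) by ring] at e
    have t : ext X (3*(m:ℤ)-1-((j:ℕ):ℤ)) (3*(m:ℤ)-1-((i:ℕ):ℤ)) = ext X ((i:ℕ):ℤ) ((j:ℕ):ℤ) := by
      apply hsD <;> omega
    rw [t] at e
    have h0 : (2:ℂ) * ext X ((i:ℕ):ℤ) ((j:ℕ):ℤ) = 0 := by linear_combination e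
    exact (mul_eq_zero.mp h0).resolve_left two_ne_zero

end S7


/-- For nonzero normalized `λ` with `λ²` not a negative real, the only
matrix `X` with `X·M·N + M·N·Xᵀ = 0` and `Xᵀ·N·conj(M) + N·conj(M)·X = 0`
(where `M = M_{λ,m}`, `N = N_{λ,m}`) is `X = 0`. -/
theorem stmt7 (l : ℂ) (hl0 : l ≠ 0) (hl : Normalized l)
    (hnotneg : ¬((l ^ 2).im = 0 ∧ (l ^ 2).re < 0)) (m : ℕ) (hm : 0 < m)
    (X : Matrix (Fin (sz l m)) (Fin (sz l m)) ℂ)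
    (h1 : X * (Mb l m * Nb l m) + Mb l m * Nb l m * Xᵀ = 0)
    (h2 : Xᵀ * (Nb l m * (Mb l m).map (starRingEnd ℂ)) +
      Nb l m * (Mb l m).map (starRingEnd ℂ) * X = 0) :
    X = 0 := by
  classical
  by_cases him : l.im = 0
  · have hM : Mb l m = Jmat l (sz l m) := by
      ext i j
      simp [Mb, Jmat, him]
    have hM' : (Mb l m).map (starRingEnd ℂ) = Jmat l (sz l m) := by
      ext i j
      simp only [Mb, Jmat, Matrix.map_apply, Matrix.of_apply, if_pos him]
      split_ifs <;> simp [Complex.conj_eq_iff_im.mpr him]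
    have hNb : Nb l m = Sb (sz l m) := rfl
    rw [hM, hNb] at h1
    rw [hM', hNb] at h2
    exact S7.real_case l hl0 X h1 h2
  · have hn : sz l m = 2 * m := by simp [sz, him]
    have hμ0 : l ^ 2 ≠ 0 := pow_ne_zero _ hl0
    have hμi : (l ^ 2).im ≠ 0 := by
      have h2 : (l ^ 2).im = 2 * l.re * l.im := by
        simp [pow_two, Complex.mul_im]
        ring
      rcases eq_or_ne l.re 0 with hre | hre
      · exfalso
        apply hnotneg
        refine ⟨by rw [h2, hre]; ring, ?_⟩
        have h3 : (l ^ 2).re = -(l.im * l.im) := by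
          simp [pow_two, Complex.mul_re, hre]
        rw [h3]
        nlinarith [mul_self_pos.mpr him]
      · rw [h2]
        intro h
        rcases mul_eq_zero.mp h with h' | h'
        · rcases mul_eq_zero.mp h' with h'' | h''
          · norm_num at h''
          · exact hre h''
        · exact him h'
    have hM : Mb l m = S7.Mcx (l ^ 2) m (sz l m) := by
      ext i j
      simp [Mb, S7.Mcx, him]
    have hM' : (Mb l m).map (starRingEnd ℂ) = S7.Mcx (starRingEnd ℂ (l ^ 2)) m (sz l m) := by
      ext i j
      simp only [Mb, S7.Mcx, Matrix.map_apply, Matrix.of_apply, if_neg him]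
      split_ifs <;> simp
    have hNb : Nb l m = Sb (sz l m) := rfl
    rw [hM, hNb] at h1
    rw [hM', hNb] at h2
    exact S7.complex_case m hm hn (l ^ 2) hμ0 hμi X h1 h2
end
end
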